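/- arXiv:2506.14708 — 8 statements merged into one kernel-verified Lean document; each statement's English description precedes it below -/
import Mathlib

section
/- The set-valued mapping (x, y₁, y₂, s̲₁, s̲₂, s̄₁, s̄₂) ↦ 𝔸(x, y₁, y₂, s̲₁, s̲₂, s̄₁, s̄₂), from ℝ₊ × ℝ₊² × 𝔻 to the space of nonempty compact subsets of ℝ₊² × ℝ₊² equipped with the Hausdorff metric, is continuous. -/
open Set

/-- Membership of a price quadruple (s̲₁,s̲₂,s̄₁,s̄₂) in the domain 𝔻. -/
def memD (s1 s2 b1 b2 : ℝ) : Prop := 0 < s1 ∧ s1 ≤ b1 ∧ 0 < s2 ∧ s2 ≤ b2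

/-- Admissible strategies 𝔸(x,y₁,y₂,s̲₁,s̲₂,s̄₁,s̄₂); an element q = (l₁,l₂,m₁,m₂). -/
def A (x y1 y2 s1 s2 b1 b2 : ℝ) : Set (ℝ × ℝ × ℝ × ℝ) :=
  {q | 0 ≤ q.1 ∧ 0 ≤ q.2.1 ∧ 0 ≤ q.2.2.1 ∧ 0 ≤ q.2.2.2 ∧
       0 ≤ x + s1 * q.2.2.1 + s2 * q.2.2.2 - b1 * q.1 - b2 * q.2.1 ∧
       0 ≤ y1 - q.2.2.1 + q.1 ∧ 0 ≤ y2 - q.2.2.2 + q.2.1 ∧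
       q.2.2.1 ≤ y1 ∧ q.2.2.2 ≤ y2}

/-- The function φ: utility of the post-transaction position, where g is the (static) utility. -/
noncomputable def phi (g : ℝ → ℝ → ℝ → ℝ) (x y1 y2 s1 s2 b1 b2 : ℝ)
    (q : ℝ × ℝ × ℝ × ℝ) : ℝ :=
  g (x + s1 * q.2.2.1 + s2 * q.2.2.2 - b1 * q.1 - b2 * q.2.1)
    (y1 - q.2.2.1 + q.1) (y2 - q.2.2.2 + q.2.1)

/-- The static value function Φ = sup of φ over admissible strategies. -/
noncomputable def Phi (g : ℝ → ℝ → ℝ → ℝ) (x y1 y2 s1 s2 b1 b2 : ℝ) : ℝ :=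
  sSup (phi g x y1 y2 s1 s2 b1 b2 '' A x y1 y2 s1 s2 b1 b2)

/-- The set 𝔸^{(i₁,i₂)}: admissible strategies with prescribed signs of l₁−m₁, l₂−m₂ and
no simultaneous buy-and-sell. -/
def Asgn (i1 i2 : ℝ) (x y1 y2 s1 s2 b1 b2 : ℝ) : Set (ℝ × ℝ × ℝ × ℝ) :=
  {q | q ∈ A x y1 y2 s1 s2 b1 b2 ∧ i1 = Real.sign (q.1 - q.2.2.1) ∧
       i2 = Real.sign (q.2.1 - q.2.2.2) ∧ q.1 * q.2.2.1 + q.2.1 * q.2.2.2 = 0}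

/-- The trading set 𝐭^{(i₁,i₂)}(s̲₁,s̲₂,s̄₁,s̄₂) ⊆ ℝ₊ × ℝ₊². -/
def tset (g : ℝ → ℝ → ℝ → ℝ) (i1 i2 s1 s2 b1 b2 : ℝ) : Set (ℝ × ℝ × ℝ) :=
  {v | 0 ≤ v.1 ∧ 0 ≤ v.2.1 ∧ 0 ≤ v.2.2 ∧
       ∃ q ∈ Asgn i1 i2 v.1 v.2.1 v.2.2 s1 s2 b1 b2,
         Phi g v.1 v.2.1 v.2.2 s1 s2 b1 b2 = phi g v.1 v.2.1 v.2.2 s1 s2 b1 b2 q}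

/-- The parameter domain ℝ₊ × ℝ₊² × 𝔻, as a subset of ℝ⁷;
a point is p = (x, y₁, y₂, s̲₁, s̲₂, s̄₁, s̄₂). -/
def Param : Set (ℝ × ℝ × ℝ × ℝ × ℝ × ℝ × ℝ) :=
  {p | 0 ≤ p.1 ∧ 0 ≤ p.2.1 ∧ 0 ≤ p.2.2.1 ∧
       memD p.2.2.2.1 p.2.2.2.2.1 p.2.2.2.2.2.1 p.2.2.2.2.2.2}

/-- 𝔸 as a function of the bundled parameter. -/
def AP (p : ℝ × ℝ × ℝ × ℝ × ℝ × ℝ × ℝ) : Set (ℝ × ℝ × ℝ × ℝ) :=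
  A p.1 p.2.1 p.2.2.1 p.2.2.2.1 p.2.2.2.2.1 p.2.2.2.2.2.1 p.2.2.2.2.2.2

/-- φ as a function of the bundled parameter. -/
noncomputable def phiP (g : ℝ → ℝ → ℝ → ℝ) (p : ℝ × ℝ × ℝ × ℝ × ℝ × ℝ × ℝ)
    (q : ℝ × ℝ × ℝ × ℝ) : ℝ :=
  phi g p.1 p.2.1 p.2.2.1 p.2.2.2.1 p.2.2.2.2.1 p.2.2.2.2.2.1 p.2.2.2.2.2.2 q

/-- Φ as a function of the bundled parameter. -/
noncomputable def PhiP (g : ℝ → ℝ → ℝ → ℝ) (p : ℝ × ℝ × ℝ × ℝ × ℝ × ℝ × ℝ) : ℝ :=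
  Phi g p.1 p.2.1 p.2.2.1 p.2.2.2.1 p.2.2.2.2.1 p.2.2.2.2.2.1 p.2.2.2.2.2.2

/-- bound on the l-components of admissible strategies -/
lemma l_bound {x y1 y2 s1 s2 b1 b2 β M : ℝ} (hβ : 0 < β)
    (hb1 : β ≤ b1) (hb2 : β ≤ b2) (hs1 : 0 ≤ s1) (hs2 : 0 ≤ s2)
    (hWM : x + s1 * y1 + s2 * y2 ≤ M * β)
    {q : ℝ × ℝ × ℝ × ℝ} (hq : q ∈ A x y1 y2 s1 s2 b1 b2) : q.1 ≤ M ∧ q.2.1 ≤ M := by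
  obtain ⟨hl1, hl2, hm1, hm2, hbud, -, -, hmy1, hmy2⟩ := hq
  have h1 : s1 * q.2.2.1 ≤ s1 * y1 := mul_le_mul_of_nonneg_left hmy1 hs1
  have h2 : s2 * q.2.2.2 ≤ s2 * y2 := mul_le_mul_of_nonneg_left hmy2 hs2
  constructor
  · have key : β * q.1 ≤ β * M := by
      linarith [mul_le_mul_of_nonneg_right hb1 hl1,
        mul_nonneg (hβ.le.trans hb2) hl2, h1, h2]
    exact le_of_mul_le_mul_left key hβ
  · have key : β * q.2.1 ≤ β * M := by
      linarith [mul_le_mul_of_nonneg_right hb2 hl2,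
        mul_nonneg (hβ.le.trans hb1) hl1, h1, h2]
    exact le_of_mul_le_mul_left key hβ

set_option maxHeartbeats 1000000 in
lemma approx {x y1 y2 s1 s2 b1 b2 x' y1' y2' s1' s2' b1' b2' d β M : ℝ}
    (hβ : 0 < β) (hM : 0 ≤ M)
    (hb1' : β ≤ b1') (hb2' : β ≤ b2')
    (hs1'0 : 0 ≤ s1') (hs2'0 : 0 ≤ s2') (hs1M : s1' ≤ M) (hs2M : s2' ≤ M)
    (hy1M : y1 ≤ M) (hy2M : y2 ≤ M)
    (hx' : 0 ≤ x') (hy1' : 0 ≤ y1') (hy2' : 0 ≤ y2')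
    (hd : 0 ≤ d)
    (hdx : |x - x'| ≤ d) (hdy1 : |y1 - y1'| ≤ d) (hdy2 : |y2 - y2'| ≤ d)
    (hds1 : |s1 - s1'| ≤ d) (hds2 : |s2 - s2'| ≤ d)
    (hdb1 : |b1 - b1'| ≤ d) (hdb2 : |b2 - b2'| ≤ d)
    {q : ℝ × ℝ × ℝ × ℝ} (hq : q ∈ A x y1 y2 s1 s2 b1 b2)
    (hl1M : q.1 ≤ M) (hl2M : q.2.1 ≤ M) :
    ∃ q' ∈ A x' y1' y2' s1' s2' b1' b2',
      dist q q' ≤ (max 1 ((1 + 6 * M) / β)) * d := by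
  obtain ⟨l1, l2, m1, m2⟩ := q
  obtain ⟨hl1, hl2, hm1, hm2, hbud, -, -, hmy1, hmy2⟩ := hq
  simp only at hl1 hl2 hm1 hm2 hbud hmy1 hmy2 hl1M hl2M
  obtain ⟨K, hKdef⟩ : ∃ k : ℝ, k = max 1 ((1 + 6 * M) / β) := ⟨_, rfl⟩
  rw [← hKdef]
  have hK1 : (1 : ℝ) ≤ K := by rw [hKdef]; exact le_max_left _ _
  have hK2 : (1 + 6 * M) / β ≤ K := by rw [hKdef]; exact le_max_right _ _
  have hK0 : (0 : ℝ) ≤ K := by linarith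
  have hKd0 : 0 ≤ K * d := mul_nonneg hK0 hd
  have hdK : d ≤ K * d := le_mul_of_one_le_left hd hK1
  obtain ⟨m1', hm1'def⟩ : ∃ t : ℝ, t = min m1 y1' := ⟨_, rfl⟩
  obtain ⟨m2', hm2'def⟩ : ∃ t : ℝ, t = min m2 y2' := ⟨_, rfl⟩
  have hm1'0 : 0 ≤ m1' := by rw [hm1'def]; exact le_min hm1 hy1'
  have hm2'0 : 0 ≤ m2' := by rw [hm2'def]; exact le_min hm2 hy2'
  have hm1'y : m1' ≤ y1' := by rw [hm1'def]; exact min_le_right _ _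
  have hm2'y : m2' ≤ y2' := by rw [hm2'def]; exact min_le_right _ _
  have hm1'le : m1' ≤ m1 := by rw [hm1'def]; exact min_le_left _ _
  have hm2'le : m2' ≤ m2 := by rw [hm2'def]; exact min_le_left _ _
  have hm1d : m1 - m1' ≤ d := by
    have h : m1 - d ≤ min m1 y1' := le_min (by linarith) (by
      have := (abs_le.mp hdy1).2; linarith)
    rw [← hm1'def] at h; linarith
  have hm2d : m2 - m2' ≤ d := by
    have h : m2 - d ≤ min m2 y2' := le_min (by linarith) (by
      have := (abs_le.mp hdy2).2; linarith)
    rw [← hm2'def] at h; linarith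
  obtain ⟨W', hW'def⟩ : ∃ w : ℝ, w = x' + s1' * m1' + s2' * m2' := ⟨_, rfl⟩
  obtain ⟨L, hLdef⟩ : ∃ l : ℝ, l = b1' * l1 + b2' * l2 := ⟨_, rfl⟩
  have hW'0 : 0 ≤ W' := by
    rw [hW'def]
    exact add_nonneg (add_nonneg hx' (mul_nonneg hs1'0 hm1'0)) (mul_nonneg hs2'0 hm2'0)
  -- key linear bound
  have hkey : L - W' ≤ (1 + 6 * M) * d := by
    have e1 : (b1' - b1) * l1 ≤ d * M := by
      have h1 : b1' - b1 ≤ d := by have := (abs_le.mp hdb1).1; linarith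
      calc (b1' - b1) * l1 ≤ d * l1 := mul_le_mul_of_nonneg_right h1 hl1
        _ ≤ d * M := mul_le_mul_of_nonneg_left hl1M hd
    have e2 : (b2' - b2) * l2 ≤ d * M := by
      have h1 : b2' - b2 ≤ d := by have := (abs_le.mp hdb2).1; linarith
      calc (b2' - b2) * l2 ≤ d * l2 := mul_le_mul_of_nonneg_right h1 hl2
        _ ≤ d * M := mul_le_mul_of_nonneg_left hl2M hd
    have e3 : x - x' ≤ d := (abs_le.mp hdx).2
    have e4 : (s1 - s1') * m1 ≤ d * M := by
      have h1 : s1 - s1' ≤ d := (abs_le.mp hds1).2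
      calc (s1 - s1') * m1 ≤ d * m1 := mul_le_mul_of_nonneg_right h1 hm1
        _ ≤ d * M := mul_le_mul_of_nonneg_left (by linarith) hd
    have e5 : (s2 - s2') * m2 ≤ d * M := by
      have h1 : s2 - s2' ≤ d := (abs_le.mp hds2).2
      calc (s2 - s2') * m2 ≤ d * m2 := mul_le_mul_of_nonneg_right h1 hm2
        _ ≤ d * M := mul_le_mul_of_nonneg_left (by linarith) hd
    have e6 : s1' * (m1 - m1') ≤ M * d := by
      calc s1' * (m1 - m1') ≤ M * (m1 - m1') :=
            mul_le_mul_of_nonneg_right hs1M (by linarith)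
        _ ≤ M * d := mul_le_mul_of_nonneg_left hm1d hM
    have e7 : s2' * (m2 - m2') ≤ M * d := by
      calc s2' * (m2 - m2') ≤ M * (m2 - m2') :=
            mul_le_mul_of_nonneg_right hs2M (by linarith)
        _ ≤ M * d := mul_le_mul_of_nonneg_left hm2d hM
    rw [hLdef, hW'def]
    linarith [e1, e2, e3, e4, e5, e6, e7, hbud]
  by_cases hcase : L ≤ W'
  · have hbud' : 0 ≤ x' + s1' * m1' + s2' * m2' - b1' * l1 - b2' * l2 := by
      linarith [hcase, hLdef, hW'def]
    refine ⟨(l1, l2, m1', m2'), ⟨hl1, hl2, hm1'0, hm2'0, hbud',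
      by simp only; linarith, by simp only; linarith, hm1'y, hm2'y⟩, ?_⟩
    have hde : dist ((l1, l2, m1, m2) : ℝ × ℝ × ℝ × ℝ) (l1, l2, m1', m2')
        = max (dist l1 l1) (max (dist l2 l2) (max (dist m1 m1') (dist m2 m2'))) := rfl
    rw [hde]
    simp only [dist_self, Real.dist_eq]
    refine max_le hKd0 (max_le hKd0 (max_le ?_ ?_))
    · rw [abs_of_nonneg (by linarith)]; linarith
    · rw [abs_of_nonneg (by linarith)]; linarith
  · push_neg at hcase
    have hL0 : 0 < L := lt_of_le_of_lt hW'0 hcase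
    obtain ⟨lam, hlamdef⟩ : ∃ t : ℝ, t = W' / L := ⟨_, rfl⟩
    have hlam0 : 0 ≤ lam := by rw [hlamdef]; exact div_nonneg hW'0 hL0.le
    have hlam1 : lam ≤ 1 := by
      rw [hlamdef, div_le_one hL0]; exact hcase.le
    have hlamL : lam * L = W' := by rw [hlamdef]; exact div_mul_cancel₀ _ hL0.ne'
    have hbud' : 0 ≤ x' + s1' * m1' + s2' * m2' - b1' * (lam * l1) - b2' * (lam * l2) := by
      have h : b1' * (lam * l1) + b2' * (lam * l2) = lam * L := by rw [hLdef]; ring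
      have h2 : x' + s1' * m1' + s2' * m2' = W' := hW'def.symm
      linarith [hlamL]
    refine ⟨(lam * l1, lam * l2, m1', m2'),
      ⟨mul_nonneg hlam0 hl1, mul_nonneg hlam0 hl2, hm1'0, hm2'0, hbud',
        by simp only; linarith [mul_nonneg hlam0 hl1],
        by simp only; linarith [mul_nonneg hlam0 hl2], hm1'y, hm2'y⟩, ?_⟩
    have hlb1 : l1 - lam * l1 ≤ K * d := by
      have h1 : β * ((1 - lam) * l1) ≤ b1' * ((1 - lam) * l1) :=
        mul_le_mul_of_nonneg_right hb1' (mul_nonneg (by linarith) hl1)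
      have h2 : b1' * ((1 - lam) * l1) = (1 - lam) * (b1' * l1) := by ring
      have h3 : (1 - lam) * (b1' * l1) ≤ (1 - lam) * L := by
        apply mul_le_mul_of_nonneg_left _ (by linarith)
        rw [hLdef]
        linarith [mul_nonneg (le_trans hβ.le hb2') hl2]
      have h4 : (1 - lam) * L = L - W' := by rw [sub_mul, one_mul, hlamL]
      have h5 : β * (l1 - lam * l1) ≤ (1 + 6 * M) * d := by linarith [h1, h2, h3, h4, hkey]
      have h6 : l1 - lam * l1 ≤ (1 + 6 * M) / β * d := by
        rw [div_mul_eq_mul_div (1 + 6 * M) β d, le_div_iff₀ hβ]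
        linarith [h5]
      have h7 : (1 + 6 * M) / β * d ≤ K * d :=
        mul_le_mul_of_nonneg_right hK2 hd
      linarith
    have hlb2 : l2 - lam * l2 ≤ K * d := by
      have h1 : β * ((1 - lam) * l2) ≤ b2' * ((1 - lam) * l2) :=
        mul_le_mul_of_nonneg_right hb2' (mul_nonneg (by linarith) hl2)
      have h2 : b2' * ((1 - lam) * l2) = (1 - lam) * (b2' * l2) := by ring
      have h3 : (1 - lam) * (b2' * l2) ≤ (1 - lam) * L := by
        apply mul_le_mul_of_nonneg_left _ (by linarith)
        rw [hLdef]
        linarith [mul_nonneg (le_trans hβ.le hb1') hl1]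
      have h4 : (1 - lam) * L = L - W' := by rw [sub_mul, one_mul, hlamL]
      have h5 : β * (l2 - lam * l2) ≤ (1 + 6 * M) * d := by linarith [h1, h2, h3, h4, hkey]
      have h6 : l2 - lam * l2 ≤ (1 + 6 * M) / β * d := by
        rw [div_mul_eq_mul_div (1 + 6 * M) β d, le_div_iff₀ hβ]
        linarith [h5]
      have h7 : (1 + 6 * M) / β * d ≤ K * d :=
        mul_le_mul_of_nonneg_right hK2 hd
      linarith
    have hll1 : lam * l1 ≤ l1 := mul_le_of_le_one_left hl1 hlam1
    have hll2 : lam * l2 ≤ l2 := mul_le_of_le_one_left hl2 hlam1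
    have hde : dist ((l1, l2, m1, m2) : ℝ × ℝ × ℝ × ℝ) (lam * l1, lam * l2, m1', m2')
        = max (dist l1 (lam * l1)) (max (dist l2 (lam * l2))
          (max (dist m1 m1') (dist m2 m2'))) := rfl
    rw [hde]
    simp only [Real.dist_eq]
    refine max_le ?_ (max_le ?_ (max_le ?_ ?_))
    · rw [abs_of_nonneg (by linarith)]; exact hlb1
    · rw [abs_of_nonneg (by linarith)]; exact hlb2
    · rw [abs_of_nonneg (by linarith)]; linarith
    · rw [abs_of_nonneg (by linarith)]; linarith

lemma comp_dists {p q : ℝ × ℝ × ℝ × ℝ × ℝ × ℝ × ℝ} :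
    |p.1 - q.1| ≤ dist p q ∧ |p.2.1 - q.2.1| ≤ dist p q ∧ |p.2.2.1 - q.2.2.1| ≤ dist p q ∧
    |p.2.2.2.1 - q.2.2.2.1| ≤ dist p q ∧ |p.2.2.2.2.1 - q.2.2.2.2.1| ≤ dist p q ∧
    |p.2.2.2.2.2.1 - q.2.2.2.2.2.1| ≤ dist p q ∧
    |p.2.2.2.2.2.2 - q.2.2.2.2.2.2| ≤ dist p q := by
  obtain ⟨a1, a2, a3, a4, a5, a6, a7⟩ := p
  obtain ⟨c1, c2, c3, c4, c5, c6, c7⟩ := q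
  have h : dist ((a1, a2, a3, a4, a5, a6, a7) : ℝ × ℝ × ℝ × ℝ × ℝ × ℝ × ℝ)
      (c1, c2, c3, c4, c5, c6, c7) =
      max (dist a1 c1) (max (dist a2 c2) (max (dist a3 c3) (max (dist a4 c4)
        (max (dist a5 c5) (max (dist a6 c6) (dist a7 c7)))))) := rfl
  simp only [h, Real.dist_eq]
  refine ⟨?_, ?_, ?_, ?_, ?_, ?_, ?_⟩ <;> simp [le_max_iff, le_refl]

set_option maxHeartbeats 1000000 in
/-- the map (x,y₁,y₂,s̲₁,s̲₂,s̄₁,s̄₂) ↦ 𝔸(x,y₁,y₂,s̲₁,s̲₂,s̄₁,s̄₂), viewed as a map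
into the nonempty compact subsets of ℝ⁴ with the Hausdorff metric, is continuous on
ℝ₊ × ℝ₊² × 𝔻. -/
theorem statement1
    (F : (ℝ × ℝ × ℝ × ℝ × ℝ × ℝ × ℝ) → TopologicalSpace.NonemptyCompacts (ℝ × ℝ × ℝ × ℝ))
    (hF : ∀ p ∈ Param, (F p : Set (ℝ × ℝ × ℝ × ℝ)) = AP p) :
    ContinuousOn F Param := by
  rw [Metric.continuousOn_iff]
  intro p₀ hp₀ ε hε
  have hp₀P := hp₀
  obtain ⟨x₀, y₁₀, y₂₀, s₁₀, s₂₀, b₁₀, b₂₀⟩ := p₀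
  simp only [Param, memD, Set.mem_setOf_eq] at hp₀
  obtain ⟨hx0, hy10, hy20, hs10, hsb10, hs20, hsb20⟩ := hp₀
  obtain ⟨β, hβdef⟩ : ∃ b : ℝ, b = min b₁₀ b₂₀ / 2 := ⟨_, rfl⟩
  have hb10pos : 0 < b₁₀ := lt_of_lt_of_le hs10 hsb10
  have hb20pos : 0 < b₂₀ := lt_of_lt_of_le hs20 hsb20
  have hβ : 0 < β := by
    have := lt_min hb10pos hb20pos
    simp only [hβdef]; linarith
  have hβb10 : 2 * β ≤ b₁₀ := by
    have := min_le_left b₁₀ b₂₀; simp only [hβdef]; linarith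
  have hβb20 : 2 * β ≤ b₂₀ := by
    have := min_le_right b₁₀ b₂₀; simp only [hβdef]; linarith
  obtain ⟨Wmax, hWdef⟩ : ∃ w : ℝ, w = (x₀ + 1) + (s₁₀ + 1) * (y₁₀ + 1) + (s₂₀ + 1) * (y₂₀ + 1) :=
    ⟨_, rfl⟩
  have hWmax0 : 0 ≤ Wmax := by
    have h1 : 0 ≤ (s₁₀ + 1) * (y₁₀ + 1) := mul_nonneg (by linarith) (by linarith)
    have h2 : 0 ≤ (s₂₀ + 1) * (y₂₀ + 1) := mul_nonneg (by linarith) (by linarith)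
    simp only [hWdef]; linarith
  obtain ⟨M, hMdef⟩ : ∃ m : ℝ, m = Wmax / β + s₁₀ + s₂₀ + y₁₀ + y₂₀ + 2 := ⟨_, rfl⟩
  have hWβ0 : 0 ≤ Wmax / β := div_nonneg hWmax0 hβ.le
  have hM2 : 2 ≤ M := by simp only [hMdef]; linarith [hs10.le, hs20.le]
  have hM0 : 0 ≤ M := by linarith
  obtain ⟨K, hKdef⟩ : ∃ k : ℝ, k = max 1 ((1 + 6 * M) / β) := ⟨_, rfl⟩
  have hK1 : (1 : ℝ) ≤ K := hKdef ▸ le_max_left _ _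
  have hKpos : 0 < K := by linarith
  refine ⟨min β (min 1 (ε / K)), by positivity, ?_⟩
  intro p hp hdlt
  have hpP := hp
  obtain ⟨x, y1, y2, s1, s2, b1, b2⟩ := p
  simp only [Param, memD, Set.mem_setOf_eq] at hp
  obtain ⟨hx, hy1, hy2, hs1, hsb1, hs2, hsb2⟩ := hp
  obtain ⟨d, hddef⟩ : ∃ dd : ℝ, dd = dist ((x, y1, y2, s1, s2, b1, b2) : ℝ × ℝ × ℝ × ℝ × ℝ × ℝ × ℝ)
    (x₀, y₁₀, y₂₀, s₁₀, s₂₀, b₁₀, b₂₀) := ⟨_, rfl⟩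
  have hd0 : 0 ≤ d := hddef ▸ dist_nonneg
  obtain ⟨hdx, hdy1, hdy2, hds1, hds2, hdb1, hdb2⟩ :=
    @comp_dists (x, y1, y2, s1, s2, b1, b2) (x₀, y₁₀, y₂₀, s₁₀, s₂₀, b₁₀, b₂₀)
  dsimp only at hdx hdy1 hdy2 hds1 hds2 hdb1 hdb2
  rw [← hddef] at hdx hdy1 hdy2 hds1 hds2 hdb1 hdb2
  rw [← hddef] at hdlt
  have hdβ : d < β := lt_of_lt_of_le hdlt (min_le_left _ _)
  have hd1 : d < 1 := lt_of_lt_of_le hdlt ((min_le_right _ _).trans (min_le_left _ _))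
  have hdε : d < ε / K := lt_of_lt_of_le hdlt ((min_le_right _ _).trans (min_le_right _ _))
  -- component bounds for p
  have hb1β : β ≤ b1 := by have := (abs_le.mp hdb1).1; linarith
  have hb2β : β ≤ b2 := by have := (abs_le.mp hdb2).1; linarith
  have hb10β : β ≤ b₁₀ := by linarith
  have hb20β : β ≤ b₂₀ := by linarith
  have hxb : x ≤ x₀ + 1 := by have := (abs_le.mp hdx).2; linarith
  have hy1b : y1 ≤ y₁₀ + 1 := by have := (abs_le.mp hdy1).2; linarith
  have hy2b : y2 ≤ y₂₀ + 1 := by have := (abs_le.mp hdy2).2; linarith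
  have hs1b : s1 ≤ s₁₀ + 1 := by have := (abs_le.mp hds1).2; linarith
  have hs2b : s2 ≤ s₂₀ + 1 := by have := (abs_le.mp hds2).2; linarith
  have hs1M : s1 ≤ M := by simp only [hMdef]; linarith [hs20.le]
  have hs2M : s2 ≤ M := by simp only [hMdef]; linarith [hs10.le]
  have hs10M : s₁₀ ≤ M := by simp only [hMdef]; linarith [hs20.le]
  have hs20M : s₂₀ ≤ M := by simp only [hMdef]; linarith [hs10.le]
  have hy1M : y1 ≤ M := by simp only [hMdef]; linarith [hs10.le, hs20.le]
  have hy2M : y2 ≤ M := by simp only [hMdef]; linarith [hs10.le, hs20.le]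
  have hy10M : y₁₀ ≤ M := by simp only [hMdef]; linarith [hs10.le, hs20.le]
  have hy20M : y₂₀ ≤ M := by simp only [hMdef]; linarith [hs10.le, hs20.le]
  have hWmaxM : Wmax ≤ M * β := by
    have h1 : Wmax / β * β = Wmax := div_mul_cancel₀ _ hβ.ne'
    have h2 : Wmax / β * β ≤ M * β := mul_le_mul_of_nonneg_right (show Wmax / β ≤ M by
      simp only [hMdef]; linarith [hs10.le, hs20.le]) hβ.le
    linarith
  have hWp : x + s1 * y1 + s2 * y2 ≤ M * β := by
    have h1 : s1 * y1 ≤ (s₁₀ + 1) * (y₁₀ + 1) :=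
      mul_le_mul hs1b hy1b hy1 (by linarith)
    have h2 : s2 * y2 ≤ (s₂₀ + 1) * (y₂₀ + 1) :=
      mul_le_mul hs2b hy2b hy2 (by linarith)
    simp only [hWdef] at hWmaxM; linarith
  have hWp0 : x₀ + s₁₀ * y₁₀ + s₂₀ * y₂₀ ≤ M * β := by
    have h1 : s₁₀ * y₁₀ ≤ (s₁₀ + 1) * (y₁₀ + 1) := by linarith [hs10.le, hy10]
    have h2 : s₂₀ * y₂₀ ≤ (s₂₀ + 1) * (y₂₀ + 1) := by linarith [hs20.le, hy20]
    simp only [hWdef] at hWmaxM; linarith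
  have hmain : dist (F (x, y1, y2, s1, s2, b1, b2)) (F (x₀, y₁₀, y₂₀, s₁₀, s₂₀, b₁₀, b₂₀))
      ≤ K * d := by
    rw [hKdef, Metric.NonemptyCompacts.dist_eq, hF _ hpP, hF _ hp₀P]
    simp only [AP]
    apply Metric.hausdorffDist_le_of_mem_dist
      (mul_nonneg (le_trans zero_le_one (le_max_left _ _)) hd0)
    · intro q hq
      obtain ⟨hq1M, hq2M⟩ := l_bound hβ hb1β hb2β hs1.le hs2.le hWp hq
      exact approx hβ hM0 hb10β hb20β hs10.le hs20.le hs10M hs20M hy1M hy2M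
        hx0 hy10 hy20 hd0 hdx hdy1 hdy2 hds1 hds2 hdb1 hdb2 hq hq1M hq2M
    · intro q hq
      obtain ⟨hq1M, hq2M⟩ := l_bound hβ hb10β hb20β hs10.le hs20.le hWp0 hq
      refine approx hβ hM0 hb1β hb2β hs1.le hs2.le hs1M hs2M hy10M hy20M
        hx hy1 hy2 hd0 ?_ ?_ ?_ ?_ ?_ ?_ ?_ hq hq1M hq2M <;>
        rw [abs_sub_comm] <;> assumption
  calc dist (F (x, y1, y2, s1, s2, b1, b2)) (F (x₀, y₁₀, y₂₀, s₁₀, s₂₀, b₁₀, b₂₀))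
      ≤ K * d := hmain
    _ < K * (ε / K) := by exact mul_lt_mul_of_pos_left hdε hKpos
    _ = ε := by field_simp
end

section
/- Let (x,y₁,y₂,s̲₁,s̲₂,s̄₁,s̄₂) ∈ ℝ₊ × ℝ₊² × 𝔻. (i) If (l̂₁,l̂₂,m̂₁,m̂₂) ∈ 𝔸(x,y₁,y₂,s̲₁,s̲₂,s̄₁,s̄₂) and (l̃₁,l̃₂,m̃₁,m̃₂) ∈ 𝔸(x,y₁,y₂,s̄₁,s̲₂,s̄₁,s̄₂) satisfy l̂₁ > 0, m̂₁ = 0, l̃₁ = 0, m̃₁ > 0, then with λ := m̃₁/(l̂₁ + m̃₁) one has (0, λl̂₂ + (1−λ)l̃₂, 0, λm̂₂ + (1−λ)m̃₂) ∈ 𝔸(x,y₁,y₂,s̲₁,s̲₂,s̄₁,s̄₂). (ii) Similarly, if (l̂₁,l̂₂,m̂₁,m̂₂) ∈ 𝔸(x,y₁,y₂,s̲₁,s̲₂,s̄₁,s̄₂) and (l̃₁,l̃₂,m̃₁,m̃₂) ∈ 𝔸(x,y₁,y₂,s̲₁,s̄₂,s̄₁,s̄₂) satisfy l̂₂ > 0,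 m̂₂ = 0, l̃₂ = 0, m̃₂ > 0, then with λ := m̃₂/(l̂₂ + m̃₂) one has (λl̂₁ + (1−λ)l̃₁, 0, λm̂₁ + (1−λ)m̃₁, 0) ∈ 𝔸(x,y₁,y₂,s̲₁,s̲₂,s̄₁,s̄₂). -/
open Set

set_option maxHeartbeats 1600000 in
/-- admissibility of suitable convex combinations of a buying strategy and a
selling strategy for one of the assets (Proposition on mixed strategies). -/
theorem statement3 (x y1 y2 s1 s2 b1 b2 : ℝ)
    (hx : 0 ≤ x) (hy1 : 0 ≤ y1) (hy2 : 0 ≤ y2) (hD : memD s1 s2 b1 b2) :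
    (∀ lh1 lh2 mh1 mh2 lt1 lt2 mt1 mt2 : ℝ,
      (lh1, lh2, mh1, mh2) ∈ A x y1 y2 s1 s2 b1 b2 →
      (lt1, lt2, mt1, mt2) ∈ A x y1 y2 b1 s2 b1 b2 →
      0 < lh1 → mh1 = 0 → lt1 = 0 → 0 < mt1 →
      (0, (mt1 / (lh1 + mt1)) * lh2 + (1 - mt1 / (lh1 + mt1)) * lt2, 0,
        (mt1 / (lh1 + mt1)) * mh2 + (1 - mt1 / (lh1 + mt1)) * mt2)
        ∈ A x y1 y2 s1 s2 b1 b2) ∧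
    (∀ lh1 lh2 mh1 mh2 lt1 lt2 mt1 mt2 : ℝ,
      (lh1, lh2, mh1, mh2) ∈ A x y1 y2 s1 s2 b1 b2 →
      (lt1, lt2, mt1, mt2) ∈ A x y1 y2 s1 b2 b1 b2 →
      0 < lh2 → mh2 = 0 → lt2 = 0 → 0 < mt2 →
      ((mt2 / (lh2 + mt2)) * lh1 + (1 - mt2 / (lh2 + mt2)) * lt1, 0,
        (mt2 / (lh2 + mt2)) * mh1 + (1 - mt2 / (lh2 + mt2)) * mt1, 0)
        ∈ A x y1 y2 s1 s2 b1 b2) := by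
  obtain ⟨hs1, hsb1, hs2, hsb2⟩ := hD
  constructor
  · rintro lh1 lh2 mh1 mh2 lt1 lt2 mt1 mt2 hH hT hpos hmh hlt hmt
    simp only [A, Set.mem_setOf_eq] at hH hT ⊢
    obtain ⟨hl1, hl2, hm1, hm2, hb, hy1h, hy2h, hmy1, hmy2⟩ := hH
    obtain ⟨tl1, tl2, tm1, tm2', tb, ty1, ty2, tmy1, tmy2⟩ := hT
    subst hmh hlt
    have hsum : 0 < lh1 + mt1 := by linarith
    set L := mt1 / (lh1 + mt1) with hL
    have hL0 : 0 ≤ L := div_nonneg hmt.le hsum.le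
    have hL1 : L ≤ 1 := by rw [hL, div_le_one hsum]; linarith
    have hkey : L * lh1 = (1 - L) * mt1 := by
      rw [hL]; field_simp; ring
    refine ⟨le_refl 0, ?_, le_refl 0, ?_, ?_, ?_, ?_, ?_, ?_⟩
    · have := mul_nonneg hL0 hl2
      have := mul_nonneg (by linarith : (0:ℝ) ≤ 1 - L) tl2
      linarith
    · have := mul_nonneg hL0 hm2
      have := mul_nonneg (by linarith : (0:ℝ) ≤ 1 - L) tm2'
      linarith
    · nlinarith [mul_nonneg hL0 hb, mul_nonneg (by linarith : (0:ℝ) ≤ 1 - L) tb, hkey]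
    · linarith
    · nlinarith [mul_nonneg hL0 hy2h, mul_nonneg (by linarith : (0:ℝ) ≤ 1 - L) ty2]
    · linarith
    · nlinarith [mul_nonneg hL0 (by linarith : (0:ℝ) ≤ y2 - mh2),
        mul_nonneg (by linarith : (0:ℝ) ≤ 1 - L) (by linarith : (0:ℝ) ≤ y2 - mt2)]
  · rintro lh1 lh2 mh1 mh2 lt1 lt2 mt1 mt2 hH hT hpos hmh hlt hmt
    simp only [A, Set.mem_setOf_eq] at hH hT ⊢
    obtain ⟨hl1, hl2, hm1, hm2, hb, hy1h, hy2h, hmy1, hmy2⟩ := hH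
    obtain ⟨tl1, tl2, tm1, tm2', tb, ty1, ty2, tmy1, tmy2⟩ := hT
    subst hmh hlt
    have hsum : 0 < lh2 + mt2 := by linarith
    set L := mt2 / (lh2 + mt2) with hL
    have hL0 : 0 ≤ L := div_nonneg hmt.le hsum.le
    have hL1 : L ≤ 1 := by rw [hL, div_le_one hsum]; linarith
    have hkey : L * lh2 = (1 - L) * mt2 := by
      rw [hL]; field_simp; ring
    refine ⟨?_, le_refl 0, ?_, le_refl 0, ?_, ?_, ?_, ?_, ?_⟩
    · have := mul_nonneg hL0 hl1
      have := mul_nonneg (by linarith : (0:ℝ) ≤ 1 - L) tl1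
      linarith
    · have := mul_nonneg hL0 hm1
      have := mul_nonneg (by linarith : (0:ℝ) ≤ 1 - L) tm1
      linarith
    · nlinarith [mul_nonneg hL0 hb, mul_nonneg (by linarith : (0:ℝ) ≤ 1 - L) tb, hkey]
    · nlinarith [mul_nonneg hL0 hy1h, mul_nonneg (by linarith : (0:ℝ) ≤ 1 - L) ty1]
    · linarith
    · nlinarith [mul_nonneg hL0 (by linarith : (0:ℝ) ≤ y1 - mh1),
        mul_nonneg (by linarith : (0:ℝ) ≤ 1 - L) (by linarith : (0:ℝ) ≤ y1 - mt1)]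
    · linarith
end

section
/- Let (x,y₁,y₂,s̲₁,s̲₂,s̄₁,s̄₂) ∈ ℝ₊ × ℝ₊² × 𝔻 and (l₁,l₂,m₁,m₂) ∈ 𝔸(x,y₁,y₂,s̲₁,s̲₂,s̄₁,s̄₂), and let (l̂₁,l̂₂,m̂₁,m̂₂) := ((l₁−m₁)⁺, (l₂−m₂)⁺, (m₁−l₁)⁺, (m₂−l₂)⁺). Then φ(x,y₁,y₂,s̲₁,s̲₂,s̄₁,s̄₂,l₁,l₂,m₁,m₂) ≤ φ(x,y₁,y₂,s̲₁,s̲₂,s̄₁,s̄₂,l̂₁,l̂₂,m̂₁,m̂₂). -/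
open Set

/-- replacing a strategy by its netted version does not decrease φ. -/
theorem statement6
    (g : ℝ → ℝ → ℝ → ℝ)
    (hg : StrictConcaveOn ℝ {v : ℝ × ℝ × ℝ | 0 ≤ v.1 ∧ 0 ≤ v.2.1 ∧ 0 ≤ v.2.2}
      (fun v => g v.1 v.2.1 v.2.2))
    (hg1 : ∀ a aQ b c : ℝ, 0 ≤ a → 0 ≤ b → 0 ≤ c → a < aQ → g a b c < g aQ b c)
    (hg2 : ∀ a b bQ c : ℝ, 0 ≤ a → 0 ≤ b → 0 ≤ c → b < bQ → g a b c < g a bQ c)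
    (hg3 : ∀ a b c cQ : ℝ, 0 ≤ a → 0 ≤ b → 0 ≤ c → c < cQ → g a b c < g a b cQ)
    (x y1 y2 s1 s2 b1 b2 : ℝ)
    (hx : 0 ≤ x) (hy1 : 0 ≤ y1) (hy2 : 0 ≤ y2) (hD : memD s1 s2 b1 b2)
    (l1 l2 m1 m2 : ℝ) (hq : (l1, l2, m1, m2) ∈ A x y1 y2 s1 s2 b1 b2) :
    phi g x y1 y2 s1 s2 b1 b2 (l1, l2, m1, m2) ≤
      phi g x y1 y2 s1 s2 b1 b2
        (max (l1 - m1) 0, max (l2 - m2) 0, max (m1 - l1) 0, max (m2 - l2) 0) := by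
  obtain ⟨hl1, hl2, hm1, hm2, hw, hY1, hY2, hm1y, hm2y⟩ := hq
  simp only [A, Set.mem_setOf_eq] at hl1 hl2 hm1 hm2 hw hY1 hY2 hm1y hm2y
  obtain ⟨hs1, hsb1, hs2, hsb2⟩ := hD
  simp only [phi]
  have e1 : y1 - max (m1 - l1) 0 + max (l1 - m1) 0 = y1 - m1 + l1 := by
    rcases le_total m1 l1 with h | h
    · rw [max_eq_right (by linarith), max_eq_left (by linarith)]; ring
    · rw [max_eq_left (by linarith), max_eq_right (by linarith)]; ring
  have e2 : y2 - max (m2 - l2) 0 + max (l2 - m2) 0 = y2 - m2 + l2 := by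
    rcases le_total m2 l2 with h | h
    · rw [max_eq_right (by linarith), max_eq_left (by linarith)]; ring
    · rw [max_eq_left (by linarith), max_eq_right (by linarith)]; ring
  rw [e1, e2]
  set A1 : ℝ := x + s1 * m1 + s2 * m2 - b1 * l1 - b2 * l2 with hA1
  set A2 : ℝ := x + s1 * max (m1 - l1) 0 + s2 * max (m2 - l2) 0 -
      b1 * max (l1 - m1) 0 - b2 * max (l2 - m2) 0 with hA2
  have hle : A1 ≤ A2 := by
    have h1 : s1 * m1 - b1 * l1 ≤ s1 * max (m1 - l1) 0 - b1 * max (l1 - m1) 0 := by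
      rcases le_total m1 l1 with h | h
      · rw [max_eq_right (by linarith), max_eq_left (by linarith)]
        nlinarith
      · rw [max_eq_left (by linarith), max_eq_right (by linarith)]
        nlinarith
    have h2 : s2 * m2 - b2 * l2 ≤ s2 * max (m2 - l2) 0 - b2 * max (l2 - m2) 0 := by
      rcases le_total m2 l2 with h | h
      · rw [max_eq_right (by linarith), max_eq_left (by linarith)]
        nlinarith
      · rw [max_eq_left (by linarith), max_eq_right (by linarith)]
        nlinarith
    simp only [hA1, hA2]; linarith
  rcases eq_or_lt_of_le hle with h | h
  · rw [h]
  · exact le_of_lt (hg1 A1 A2 (y1 - m1 + l1) (y2 - m2 + l2) hw hY1 hY2 h)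
end

section
/- Fix (x,y₁,y₂,s̲₁,s̲₂,s̄₁,s̄₂) ∈ ℝ₊ × ℝ₊² × 𝔻. For every λ ∈ (0,1) and every (l₁¹,l₂¹,m₁¹,m₂¹), (l₁²,l₂²,m₁²,m₂²) ∈ 𝔸(x,y₁,y₂,s̲₁,s̲₂,s̄₁,s̄₂) with l₁¹m₁¹ + l₂¹m₂¹ = 0, l₁²m₁² + l₂²m₂² = 0 and (l₁¹,l₂¹,m₁¹,m₂¹) ≠ (l₁²,l₂²,m₁²,m₂²), one has φ(x,y₁,y₂,s̲₁,s̲₂,s̄₁,s̄₂, λ(l₁¹,l₂¹,m₁¹,m₂¹) + (1−λ)(l₁²,l₂²,m₁²,m₂²)) > λ·φ(x,y₁,y₂,s̲₁,s̲₂,s̄₁,s̄₂,l₁¹,l₂¹,m₁¹,m₂¹) + (1−λ)·φ(x,y₁,y₂,s̲₁,s̲₂,s̄₁,s̄₂,l₁²,l₂²,m₁²,m₂²); that is, φ is strictly concave on the class of strategies with l₁m₁ + l₂m₂ = 0. -/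
open Set

lemma aux_eq (l m l' m' : ℝ) (hl : 0 ≤ l) (hm : 0 ≤ m) (hl' : 0 ≤ l') (hm' : 0 ≤ m')
    (e : l * m = 0) (e' : l' * m' = 0) (hd : l - m = l' - m') : l = l' ∧ m = m' := by
  have h1 : (l - l') ^ 2 ≤ 0 := by nlinarith [mul_nonneg hl hm', mul_nonneg hl' hm]
  have h2 : l = l' := by nlinarith [sq_nonneg (l - l')]
  exact ⟨h2, by linarith⟩

set_option maxHeartbeats 1000000

/-- φ is strictly concave within the class of admissible strategies satisfying
l₁m₁ + l₂m₂ = 0. -/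
theorem statement7
    (g : ℝ → ℝ → ℝ → ℝ)
    (hg : StrictConcaveOn ℝ {v : ℝ × ℝ × ℝ | 0 ≤ v.1 ∧ 0 ≤ v.2.1 ∧ 0 ≤ v.2.2}
      (fun v => g v.1 v.2.1 v.2.2))
    (hg1 : ∀ a aQ b c : ℝ, 0 ≤ a → 0 ≤ b → 0 ≤ c → a < aQ → g a b c < g aQ b c)
    (hg2 : ∀ a b bQ c : ℝ, 0 ≤ a → 0 ≤ b → 0 ≤ c → b < bQ → g a b c < g a bQ c)
    (hg3 : ∀ a b c cQ : ℝ, 0 ≤ a → 0 ≤ b → 0 ≤ c → c < cQ → g a b c < g a b cQ)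
    (x y1 y2 s1 s2 b1 b2 : ℝ)
    (hx : 0 ≤ x) (hy1 : 0 ≤ y1) (hy2 : 0 ≤ y2) (hD : memD s1 s2 b1 b2)
    (lam : ℝ) (hlam : lam ∈ Set.Ioo (0 : ℝ) 1)
    (q1 q2 : ℝ × ℝ × ℝ × ℝ)
    (h1 : q1 ∈ A x y1 y2 s1 s2 b1 b2) (h2 : q2 ∈ A x y1 y2 s1 s2 b1 b2)
    (hz1 : q1.1 * q1.2.2.1 + q1.2.1 * q1.2.2.2 = 0)
    (hz2 : q2.1 * q2.2.2.1 + q2.2.1 * q2.2.2.2 = 0)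
    (hne : q1 ≠ q2) :
    lam * phi g x y1 y2 s1 s2 b1 b2 q1 + (1 - lam) * phi g x y1 y2 s1 s2 b1 b2 q2 <
      phi g x y1 y2 s1 s2 b1 b2 (lam • q1 + (1 - lam) • q2) := by
  obtain ⟨l1, l2, m1, m2⟩ := q1
  obtain ⟨l1', l2', m1', m2'⟩ := q2
  obtain ⟨hl1, hl2, hm1, hm2, hw, hp1, hp2, _, _⟩ := h1
  obtain ⟨hl1', hl2', hm1', hm2', hw', hp1', hp2', _, _⟩ := h2
  obtain ⟨hlam0, hlam1⟩ := hlam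
  dsimp only at hz1 hz2 hl1 hl2 hm1 hm2 hw hp1 hp2 hl1' hl2' hm1' hm2' hw' hp1' hp2'
  set v1 : ℝ × ℝ × ℝ := (x + s1 * m1 + s2 * m2 - b1 * l1 - b2 * l2,
    y1 - m1 + l1, y2 - m2 + l2) with hv1
  set v2 : ℝ × ℝ × ℝ := (x + s1 * m1' + s2 * m2' - b1 * l1' - b2 * l2',
    y1 - m1' + l1', y2 - m2' + l2') with hv2
  have hv1mem : v1 ∈ {v : ℝ × ℝ × ℝ | 0 ≤ v.1 ∧ 0 ≤ v.2.1 ∧ 0 ≤ v.2.2} :=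
    ⟨hw, hp1, hp2⟩
  have hv2mem : v2 ∈ {v : ℝ × ℝ × ℝ | 0 ≤ v.1 ∧ 0 ≤ v.2.1 ∧ 0 ≤ v.2.2} :=
    ⟨hw', hp1', hp2'⟩
  -- l m = 0 componentwise
  have e1 : l1 * m1 = 0 := by linarith [mul_nonneg hl1 hm1, mul_nonneg hl2 hm2]
  have e2 : l2 * m2 = 0 := by linarith [mul_nonneg hl1 hm1, mul_nonneg hl2 hm2]
  have e1' : l1' * m1' = 0 := by linarith [mul_nonneg hl1' hm1', mul_nonneg hl2' hm2']
  have e2' : l2' * m2' = 0 := by linarith [mul_nonneg hl1' hm1', mul_nonneg hl2' hm2']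
  have hvne : v1 ≠ v2 := by
    intro h
    rw [hv1, hv2] at h
    simp only [Prod.mk.injEq] at h
    obtain ⟨_, hd1, hd2⟩ := h
    obtain ⟨hll1, hmm1⟩ := aux_eq l1 m1 l1' m1' hl1 hm1 hl1' hm1' e1 e1' (by linarith)
    obtain ⟨hll2, hmm2⟩ := aux_eq l2 m2 l2' m2' hl2 hm2 hl2' hm2' e2 e2' (by linarith)
    exact hne (by simp [hll1, hll2, hmm1, hmm2])
  have := hg.2 hv1mem hv2mem hvne hlam0 (show (0:ℝ) < 1 - lam by linarith) (by ring)
  simp only [hv1, hv2, Prod.smul_mk, Prod.mk_add_mk, smul_eq_mul] at this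
  have heq : phi g x y1 y2 s1 s2 b1 b2 (lam • (l1, l2, m1, m2) + (1 - lam) • (l1', l2', m1', m2'))
      = g (lam * (x + s1 * m1 + s2 * m2 - b1 * l1 - b2 * l2) +
            (1 - lam) * (x + s1 * m1' + s2 * m2' - b1 * l1' - b2 * l2'))
          (lam * (y1 - m1 + l1) + (1 - lam) * (y1 - m1' + l1'))
          (lam * (y2 - m2 + l2) + (1 - lam) * (y2 - m2' + l2')) := by
    simp only [phi, Prod.smul_mk, Prod.mk_add_mk, smul_eq_mul]
    ring_nf
  rw [heq]
  simpa [phi] using this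
end

section
/- Assume (x,y₁,y₂) ∈ ℝ₊ × ℝ₊² and (s̲₁¹,s̲₂¹,s̄₁¹,s̄₂¹), (s̲₁²,s̲₂²,s̄₁²,s̄₂²) ∈ 𝔻 are such that s̲₁¹ ≤ s̲₁² ≤ s̄₁² ≤ s̄₁¹ and s̲₂¹ ≤ s̲₂² ≤ s̄₂² ≤ s̄₂¹. Then Φ(x,y₁,y₂,s̲₁¹,s̲₂¹,s̄₁¹,s̄₂¹) ≤ Φ(x,y₁,y₂,s̲₁²,s̲₂²,s̄₁²,s̄₂²). -/
open Set

lemma gmono (g : ℝ → ℝ → ℝ → ℝ)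
    (hg1 : ∀ a aQ b c : ℝ, 0 ≤ a → 0 ≤ b → 0 ≤ c → a < aQ → g a b c < g aQ b c)
    (hg2 : ∀ a b bQ c : ℝ, 0 ≤ a → 0 ≤ b → 0 ≤ c → b < bQ → g a b c < g a bQ c)
    (hg3 : ∀ a b c cQ : ℝ, 0 ≤ a → 0 ≤ b → 0 ≤ c → c < cQ → g a b c < g a b cQ) :
    ∀ a a' b b' c c' : ℝ, 0 ≤ a → 0 ≤ b → 0 ≤ c → a ≤ a' → b ≤ b' → c ≤ c' →
      g a b c ≤ g a' b' c' := by
  intro a a' b b' c c' ha hb hc haa hbb hcc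
  have h1 : g a b c ≤ g a' b c := by
    rcases haa.lt_or_eq with h | h
    · exact (hg1 a a' b c ha hb hc h).le
    · rw [h]
  have h2 : g a' b c ≤ g a' b' c := by
    rcases hbb.lt_or_eq with h | h
    · exact (hg2 a' b b' c (ha.trans haa) hb hc h).le
    · rw [h]
  have h3 : g a' b' c ≤ g a' b' c' := by
    rcases hcc.lt_or_eq with h | h
    · exact (hg3 a' b' c c' (ha.trans haa) (hb.trans hbb) hc h).le
    · rw [h]
  linarith

set_option maxHeartbeats 1000000 in
/-- Φ is monotone with respect to tightening the bid-ask intervals. -/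
theorem statement9
    (g : ℝ → ℝ → ℝ → ℝ)
    (hg : StrictConcaveOn ℝ {v : ℝ × ℝ × ℝ | 0 ≤ v.1 ∧ 0 ≤ v.2.1 ∧ 0 ≤ v.2.2}
      (fun v => g v.1 v.2.1 v.2.2))
    (hg1 : ∀ a aQ b c : ℝ, 0 ≤ a → 0 ≤ b → 0 ≤ c → a < aQ → g a b c < g aQ b c)
    (hg2 : ∀ a b bQ c : ℝ, 0 ≤ a → 0 ≤ b → 0 ≤ c → b < bQ → g a b c < g a bQ c)
    (hg3 : ∀ a b c cQ : ℝ, 0 ≤ a → 0 ≤ b → 0 ≤ c → c < cQ → g a b c < g a b cQ)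
    (x y1 y2 : ℝ) (hx : 0 ≤ x) (hy1 : 0 ≤ y1) (hy2 : 0 ≤ y2)
    (s11 s21 b11 b21 s12 s22 b12 b22 : ℝ)
    (hD1 : memD s11 s21 b11 b21) (hD2 : memD s12 s22 b12 b22)
    (h1 : s11 ≤ s12) (h2 : s12 ≤ b12) (h3 : b12 ≤ b11)
    (h4 : s21 ≤ s22) (h5 : s22 ≤ b22) (h6 : b22 ≤ b21) :
    Phi g x y1 y2 s11 s21 b11 b21 ≤ Phi g x y1 y2 s12 s22 b12 b22 := by
  obtain ⟨hs11, hsb1, hs21, hsb2⟩ := hD1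
  obtain ⟨hs12, hsb12, hs22, hsb22⟩ := hD2
  have hb12 : 0 < b12 := lt_of_lt_of_le hs12 hsb12
  have hb22 : 0 < b22 := lt_of_lt_of_le hs22 hsb22
  have hmono := gmono g hg1 hg2 hg3
  set X : ℝ := x + s12 * y1 + s22 * y2 with hXdef
  have hXnn : 0 ≤ X := by
    have := mul_nonneg hs12.le hy1
    have := mul_nonneg hs22.le hy2
    simp only [hXdef]; linarith
  have hX1 : b12 * (X / b12) = X := mul_div_cancel₀ X (ne_of_gt hb12)
  have hX2 : b22 * (X / b22) = X := mul_div_cancel₀ X (ne_of_gt hb22)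
  set M : ℝ := g X (y1 + X / b12) (y2 + X / b22) with hMdef
  have hbdd : ∀ q ∈ A x y1 y2 s12 s22 b12 b22,
      phi g x y1 y2 s12 s22 b12 b22 q ≤ M := by
    rintro ⟨l1, l2, m1, m2⟩ ⟨hl1, hl2, hm1, hm2, hw, hu1, hu2, hm1y, hm2y⟩
    simp only [phi, hMdef]
    apply hmono _ _ _ _ _ _ hw (by linarith) (by linarith)
    · linarith [mul_nonneg hb12.le hl1, mul_nonneg hb22.le hl2,
        mul_le_mul_of_nonneg_left hm1y hs12.le,
        mul_le_mul_of_nonneg_left hm2y hs22.le]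
    · have hl1X : l1 ≤ X / b12 := by
        rw [le_div_iff₀ hb12]
        simp only at hw
        nlinarith [mul_nonneg hb22.le hl2,
          mul_le_mul_of_nonneg_left hm1y hs12.le,
          mul_le_mul_of_nonneg_left hm2y hs22.le]
      simp only at hm1
      linarith
    · have hl2X : l2 ≤ X / b22 := by
        rw [le_div_iff₀ hb22]
        simp only at hw
        nlinarith [mul_nonneg hb12.le hl1,
          mul_le_mul_of_nonneg_left hm1y hs12.le,
          mul_le_mul_of_nonneg_left hm2y hs22.le]
      simp only at hm2
      linarith
  have hBdd2 : BddAbove (phi g x y1 y2 s12 s22 b12 b22 '' A x y1 y2 s12 s22 b12 b22) := by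
    refine ⟨M, ?_⟩
    rintro v ⟨q, hq, rfl⟩
    exact hbdd q hq
  have h0 : ((0 : ℝ), (0 : ℝ), (0 : ℝ), (0 : ℝ)) ∈ A x y1 y2 s11 s21 b11 b21 := by
    simp [A, hx, hy1, hy2]
  unfold Phi
  apply csSup_le ⟨_, Set.mem_image_of_mem _ h0⟩
  rintro v ⟨⟨l1, l2, m1, m2⟩, ⟨hl1, hl2, hm1, hm2, hw, hu1, hu2, hm1y, hm2y⟩, rfl⟩
  have hq2 : ((l1, l2, m1, m2) : ℝ × ℝ × ℝ × ℝ) ∈ A x y1 y2 s12 s22 b12 b22 := by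
    refine ⟨hl1, hl2, hm1, hm2, ?_, hu1, hu2, hm1y, hm2y⟩
    simp only at hw ⊢
    linarith [mul_le_mul_of_nonneg_right h1 hm1, mul_le_mul_of_nonneg_right h4 hm2,
      mul_le_mul_of_nonneg_right h3 hl1, mul_le_mul_of_nonneg_right h6 hl2]
  have hphile : phi g x y1 y2 s11 s21 b11 b21 (l1, l2, m1, m2) ≤
      phi g x y1 y2 s12 s22 b12 b22 (l1, l2, m1, m2) := by
    simp only [phi]
    apply hmono _ _ _ _ _ _ hw hu1 hu2 _ le_rfl le_rfl
    linarith [mul_le_mul_of_nonneg_right h1 hm1, mul_le_mul_of_nonneg_right h4 hm2,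
      mul_le_mul_of_nonneg_right h3 hl1, mul_le_mul_of_nonneg_right h6 hl2]
  exact hphile.trans (le_csSup hBdd2 (Set.mem_image_of_mem _ hq2))
end

section
/- Let (x,y₁,y₂,s̲₁,s̲₂,s̄₁,s̄₂) ∈ ℝ₊ × ℝ₊² × 𝔻 and (i₁,i₂) ∈ {−1,0,1}². Then the set 𝔸^{(i₁,i₂)}(x,y₁,y₂,s̲₁,s̲₂,s̄₁,s̄₂) is convex. -/
open Set

lemma pos_of_one_eq_sign {x : ℝ} (h : (1:ℝ) = Real.sign x) : 0 < x := by
  rcases lt_trichotomy x 0 with h' | h' | h'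
  · rw [Real.sign_of_neg h'] at h; norm_num at h
  · rw [h', Real.sign_zero] at h; norm_num at h
  · exact h'

lemma neg_of_neg_one_eq_sign {x : ℝ} (h : (-1:ℝ) = Real.sign x) : x < 0 := by
  rcases lt_trichotomy x 0 with h' | h' | h'
  · exact h'
  · rw [h', Real.sign_zero] at h; norm_num at h
  · rw [Real.sign_of_pos h'] at h; norm_num at h

lemma eq_of_zero_eq_sign {x : ℝ} (h : (0:ℝ) = Real.sign x) : x = 0 :=
  Real.sign_eq_zero_iff.mp h.symm

lemma pos_combo {a b u v : ℝ} (ha : 0 ≤ a) (hb : 0 ≤ b) (hab : a + b = 1)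
    (hu : 0 < u) (hv : 0 < v) : 0 < a * u + b * v := by
  rcases ha.lt_or_eq with h | h
  · nlinarith [mul_pos h hu, mul_nonneg hb hv.le]
  · nlinarith [mul_pos (show (0:ℝ) < b by linarith) hv]

lemma combo_sign (i a b lq mq lr mr : ℝ) (hi : i ∈ ({-1, 0, 1} : Set ℝ))
    (ha : 0 ≤ a) (hb : 0 ≤ b) (hab : a + b = 1)
    (hlq : 0 ≤ lq) (hmq : 0 ≤ mq) (hlr : 0 ≤ lr) (hmr : 0 ≤ mr)
    (h1 : i = Real.sign (lq - mq)) (h2 : i = Real.sign (lr - mr))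
    (hpq : lq * mq = 0) (hpr : lr * mr = 0) :
    i = Real.sign ((a * lq + b * lr) - (a * mq + b * mr)) ∧
      (a * lq + b * lr) * (a * mq + b * mr) = 0 := by
  rcases hi with rfl | rfl | rfl
  · have h1' := neg_of_neg_one_eq_sign h1
    have h2' := neg_of_neg_one_eq_sign h2
    have hlq0 : lq = 0 := by nlinarith
    have hlr0 : lr = 0 := by nlinarith
    subst hlq0 hlr0
    have hpos := pos_combo ha hb hab (show 0 < mq by linarith) (show 0 < mr by linarith)
    constructor
    · rw [Real.sign_of_neg (by linarith)]
    · ring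
  · have h1' := eq_of_zero_eq_sign h1
    have h2' := eq_of_zero_eq_sign h2
    have hlq0 : lq = 0 := by nlinarith
    have hlr0 : lr = 0 := by nlinarith
    have hmq0 : mq = 0 := by linarith
    have hmr0 : mr = 0 := by linarith
    subst hlq0 hlr0 hmq0 hmr0
    simp
  · have h1' := pos_of_one_eq_sign h1
    have h2' := pos_of_one_eq_sign h2
    have hmq0 : mq = 0 := by nlinarith
    have hmr0 : mr = 0 := by nlinarith
    subst hmq0 hmr0
    have hpos := pos_combo ha hb hab (show 0 < lq by linarith) (show 0 < lr by linarith)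
    constructor
    · rw [Real.sign_of_pos (by linarith)]
    · ring

set_option maxHeartbeats 1600000

/-- the set 𝔸^{(i₁,i₂)}(x,y₁,y₂,s̲₁,s̲₂,s̄₁,s̄₂) is convex. -/
theorem statement11 (x y1 y2 s1 s2 b1 b2 : ℝ)
    (hx : 0 ≤ x) (hy1 : 0 ≤ y1) (hy2 : 0 ≤ y2) (hD : memD s1 s2 b1 b2)
    (i1 i2 : ℝ) (hi1 : i1 ∈ ({-1, 0, 1} : Set ℝ)) (hi2 : i2 ∈ ({-1, 0, 1} : Set ℝ)) :
    Convex ℝ (Asgn i1 i2 x y1 y2 s1 s2 b1 b2) :=  by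
  intro p hp q hq a b ha hb hab
  obtain ⟨pl1, pl2, pm1, pm2⟩ := p
  obtain ⟨ql1, ql2, qm1, qm2⟩ := q
  simp only [Asgn, A, Set.mem_setOf_eq] at hp hq
  obtain ⟨⟨hp1, hp2, hp3, hp4, hp5, hp6, hp7, hp8, hp9⟩, hps1, hps2, hpp⟩ := hp
  obtain ⟨⟨hq1, hq2, hq3, hq4, hq5, hq6, hq7, hq8, hq9⟩, hqs1, hqs2, hqp⟩ := hq
  have hpp1 : pl1 * pm1 = 0 := by
    linarith [mul_nonneg hp1 hp3, mul_nonneg hp2 hp4]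
  have hpp2 : pl2 * pm2 = 0 := by
    linarith [mul_nonneg hp1 hp3, mul_nonneg hp2 hp4]
  have hqp1 : ql1 * qm1 = 0 := by
    linarith [mul_nonneg hq1 hq3, mul_nonneg hq2 hq4]
  have hqp2 : ql2 * qm2 = 0 := by
    linarith [mul_nonneg hq1 hq3, mul_nonneg hq2 hq4]
  have hc1 := combo_sign i1 a b pl1 pm1 ql1 qm1 hi1 ha hb hab
    hp1 hp3 hq1 hq3 hps1 hqs1 hpp1 hqp1
  have hc2 := combo_sign i2 a b pl2 pm2 ql2 qm2 hi2 ha hb hab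
    hp2 hp4 hq2 hq4 hps2 hqs2 hpp2 hqp2
  show (a * pl1 + b * ql1, a * pl2 + b * ql2, a * pm1 + b * qm1, a * pm2 + b * qm2) ∈
    Asgn i1 i2 x y1 y2 s1 s2 b1 b2
  simp only [Asgn, A, Set.mem_setOf_eq]
  refine ⟨⟨?_, ?_, ?_, ?_, ?_, ?_, ?_, ?_, ?_⟩, hc1.1, hc2.1, by linarith [hc1.2, hc2.2]⟩
  · nlinarith [mul_nonneg ha hp1, mul_nonneg hb hq1]
  · nlinarith [mul_nonneg ha hp2, mul_nonneg hb hq2]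
  · nlinarith [mul_nonneg ha hp3, mul_nonneg hb hq3]
  · nlinarith [mul_nonneg ha hp4, mul_nonneg hb hq4]
  · nlinarith [mul_nonneg ha hp5, mul_nonneg hb hq5]
  · nlinarith [mul_nonneg ha hp6, mul_nonneg hb hq6]
  · nlinarith [mul_nonneg ha hp7, mul_nonneg hb hq7]
  · nlinarith [mul_nonneg ha (sub_nonneg.mpr hp8), mul_nonneg hb (sub_nonneg.mpr hq8)]
  · nlinarith [mul_nonneg ha (sub_nonneg.mpr hp9), mul_nonneg hb (sub_nonneg.mpr hq9)]
end

section
/- For (s̲₁,s̲₂,s̄₁,s̄₂) ∈ 𝔻 and i, j ∈ {−1,0,1} the trading zones satisfy: (1) t^{(−1,i)}(s̲₁,s̲₂,s̲₁,s̄₂) ⊆ t^{(−1,i)}(s̲₁,s̲₂,s̄₁,s̄₂); (2) t^{(0,i)}(s̲₁,s̲₂,s̲₁,s̄₂) ⊆ t^{(0,i)}(s̲₁,s̲₂,s̄₁,s̄₂); (3) t^{(0,i)}(s̲₁,s̲₂,s̲₁,s̄₂) ∩ t^{(−1,j)}(s̲₁,s̲₂,s̄₁,s̄₂) = ∅. 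-/
open Set

section AuxStatement14

/-- weak monotonicity of g in all three arguments -/
lemma st14_gle (g : ℝ → ℝ → ℝ → ℝ)
    (hg1 : ∀ a aQ b c : ℝ, 0 ≤ a → 0 ≤ b → 0 ≤ c → a < aQ → g a b c < g aQ b c)
    (hg2 : ∀ a b bQ c : ℝ, 0 ≤ a → 0 ≤ b → 0 ≤ c → b < bQ → g a b c < g a bQ c)
    (hg3 : ∀ a b c cQ : ℝ, 0 ≤ a → 0 ≤ b → 0 ≤ c → c < cQ → g a b c < g a b cQ)
    {a b c a' b' c' : ℝ} (ha : 0 ≤ a) (hb : 0 ≤ b) (hc : 0 ≤ c)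
    (h1 : a ≤ a') (h2 : b ≤ b') (h3 : c ≤ c') : g a b c ≤ g a' b' c' := by
  have ha' : 0 ≤ a' := ha.trans h1
  have hb' : 0 ≤ b' := hb.trans h2
  have u1 : g a b c ≤ g a' b c := by
    rcases h1.lt_or_eq with h | h
    · exact (hg1 a a' b c ha hb hc h).le
    · rw [h]
  have u2 : g a' b c ≤ g a' b' c := by
    rcases h2.lt_or_eq with h | h
    · exact (hg2 a' b b' c ha' hb hc h).le
    · rw [h]
  have u3 : g a' b' c ≤ g a' b' c' := by
    rcases h3.lt_or_eq with h | h
    · exact (hg3 a' b' c c' ha' hb' hc h).le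
    · rw [h]
  linarith

lemma st14_bddAbove (g : ℝ → ℝ → ℝ → ℝ)
    (hg1 : ∀ a aQ b c : ℝ, 0 ≤ a → 0 ≤ b → 0 ≤ c → a < aQ → g a b c < g aQ b c)
    (hg2 : ∀ a b bQ c : ℝ, 0 ≤ a → 0 ≤ b → 0 ≤ c → b < bQ → g a b c < g a bQ c)
    (hg3 : ∀ a b c cQ : ℝ, 0 ≤ a → 0 ≤ b → 0 ≤ c → c < cQ → g a b c < g a b cQ)
    (x y1 y2 s1 s2 b1 b2 : ℝ)
    (hs1 : 0 < s1) (hs2 : 0 < s2) (hb1 : 0 < b1) (hb2 : 0 < b2) :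
    BddAbove (phi g x y1 y2 s1 s2 b1 b2 '' A x y1 y2 s1 s2 b1 b2) := by
  set X := x + s1 * y1 + s2 * y2 with hXdef
  set M := X + y1 + y2 + X / b1 + X / b2 with hMdef
  refine ⟨g M M M, ?_⟩
  rintro r ⟨⟨l1, l2, m1, m2⟩, hq, rfl⟩
  simp only [A, Set.mem_setOf_eq] at hq
  obtain ⟨h1, h2, h3, h4, h5, h6, h7, h8, h9⟩ := hq
  have p1 : s1 * m1 ≤ s1 * y1 := mul_le_mul_of_nonneg_left h8 hs1.le
  have p2 : s2 * m2 ≤ s2 * y2 := mul_le_mul_of_nonneg_left h9 hs2.le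
  have p3 : 0 ≤ b1 * l1 := mul_nonneg hb1.le h1
  have p4 : 0 ≤ b2 * l2 := mul_nonneg hb2.le h2
  have hX0 : 0 ≤ X := by simp only [hXdef]; linarith
  have hl1 : l1 ≤ X / b1 := by rw [le_div_iff₀ hb1]; simp only [hXdef]; linarith
  have hl2 : l2 ≤ X / b2 := by rw [le_div_iff₀ hb2]; simp only [hXdef]; linarith
  have hd1 : 0 ≤ X / b1 := div_nonneg hX0 hb1.le
  have hd2 : 0 ≤ X / b2 := div_nonneg hX0 hb2.le
  have hy1 : 0 ≤ y1 := h3.trans h8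
  have hy2 : 0 ≤ y2 := h4.trans h9
  simp only [phi]
  refine st14_gle g hg1 hg2 hg3 h5 h6 h7 ?_ ?_ ?_
  · simp only [hXdef, hMdef] at *; linarith
  · simp only [hXdef, hMdef] at *; linarith
  · simp only [hXdef, hMdef] at *; linarith

lemma st14_A_mono {x y1 y2 s1 s2 b1 b2 : ℝ} (hb : s1 ≤ b1) {q : ℝ × ℝ × ℝ × ℝ}
    (hq : q ∈ A x y1 y2 s1 s2 b1 b2) : q ∈ A x y1 y2 s1 s2 s1 b2 := by
  simp only [A, Set.mem_setOf_eq] at hq ⊢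
  obtain ⟨h1, h2, h3, h4, h5, h6, h7, h8, h9⟩ := hq
  have : s1 * q.1 ≤ b1 * q.1 := mul_le_mul_of_nonneg_right hb h1
  exact ⟨h1, h2, h3, h4, by linarith, h6, h7, h8, h9⟩

lemma st14_phi_mono (g : ℝ → ℝ → ℝ → ℝ)
    (hg1 : ∀ a aQ b c : ℝ, 0 ≤ a → 0 ≤ b → 0 ≤ c → a < aQ → g a b c < g aQ b c)
    {x y1 y2 s1 s2 b1 b2 : ℝ} (hb : s1 ≤ b1) {q : ℝ × ℝ × ℝ × ℝ}
    (hq : q ∈ A x y1 y2 s1 s2 b1 b2) :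
    phi g x y1 y2 s1 s2 b1 b2 q ≤ phi g x y1 y2 s1 s2 s1 b2 q := by
  simp only [A, Set.mem_setOf_eq] at hq
  obtain ⟨h1, h2, h3, h4, h5, h6, h7, h8, h9⟩ := hq
  have hm : s1 * q.1 ≤ b1 * q.1 := mul_le_mul_of_nonneg_right hb h1
  simp only [phi]
  rcases eq_or_lt_of_le hm with h | h
  · rw [show x + s1 * q.2.2.1 + s2 * q.2.2.2 - b1 * q.1 - b2 * q.2.1
        = x + s1 * q.2.2.1 + s2 * q.2.2.2 - s1 * q.1 - b2 * q.2.1 by rw [h]]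
  · exact (hg1 _ _ _ _ h5 h6 h7 (by linarith)).le

lemma st14_A_swap {x y1 y2 s1 s2 b1 b2 : ℝ} {q : ℝ × ℝ × ℝ × ℝ} (h : q.1 = 0) :
    q ∈ A x y1 y2 s1 s2 b1 b2 ↔ q ∈ A x y1 y2 s1 s2 s1 b2 := by
  simp only [A, Set.mem_setOf_eq, h, mul_zero]

lemma st14_phi_swap (g : ℝ → ℝ → ℝ → ℝ) {x y1 y2 s1 s2 b1 b2 : ℝ}
    {q : ℝ × ℝ × ℝ × ℝ} (h : q.1 = 0) :
    phi g x y1 y2 s1 s2 b1 b2 q = phi g x y1 y2 s1 s2 s1 b2 q := by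
  simp only [phi, h, mul_zero]

/-- If the sup in the frictionless (in asset 1) market is attained at a strategy
with l₁ = 0, then the same holds in the market with buy price b1. -/
lemma st14_Phi_swap (g : ℝ → ℝ → ℝ → ℝ)
    (hg1 : ∀ a aQ b c : ℝ, 0 ≤ a → 0 ≤ b → 0 ≤ c → a < aQ → g a b c < g aQ b c)
    (hg2 : ∀ a b bQ c : ℝ, 0 ≤ a → 0 ≤ b → 0 ≤ c → b < bQ → g a b c < g a bQ c)
    (hg3 : ∀ a b c cQ : ℝ, 0 ≤ a → 0 ≤ b → 0 ≤ c → c < cQ → g a b c < g a b cQ)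
    {x y1 y2 s1 s2 b1 b2 : ℝ} (hD : memD s1 s2 b1 b2) {q : ℝ × ℝ × ℝ × ℝ}
    (hq : q ∈ A x y1 y2 s1 s2 s1 b2) (hq1 : q.1 = 0)
    (hmax : Phi g x y1 y2 s1 s2 s1 b2 = phi g x y1 y2 s1 s2 s1 b2 q) :
    Phi g x y1 y2 s1 s2 b1 b2 = phi g x y1 y2 s1 s2 b1 b2 q := by
  obtain ⟨hs1, hs1b1, hs2, hs2b2⟩ := hD
  have hb1 : 0 < b1 := lt_of_lt_of_le hs1 hs1b1
  have hb2 : 0 < b2 := lt_of_lt_of_le hs2 hs2b2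
  have bddS := st14_bddAbove g hg1 hg2 hg3 x y1 y2 s1 s2 s1 b2 hs1 hs2 hs1 hb2
  have bddB := st14_bddAbove g hg1 hg2 hg3 x y1 y2 s1 s2 b1 b2 hs1 hs2 hb1 hb2
  have hqB : q ∈ A x y1 y2 s1 s2 b1 b2 := (st14_A_swap hq1).mpr hq
  have hpe : phi g x y1 y2 s1 s2 b1 b2 q = phi g x y1 y2 s1 s2 s1 b2 q :=
    st14_phi_swap g hq1
  apply le_antisymm
  · have hne : (phi g x y1 y2 s1 s2 b1 b2 '' A x y1 y2 s1 s2 b1 b2).Nonempty :=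
      ⟨_, ⟨q, hqB, rfl⟩⟩
    refine csSup_le hne ?_
    rintro r ⟨q', hq', rfl⟩
    calc phi g x y1 y2 s1 s2 b1 b2 q'
        ≤ phi g x y1 y2 s1 s2 s1 b2 q' := st14_phi_mono g hg1 hs1b1 hq'
      _ ≤ Phi g x y1 y2 s1 s2 s1 b2 := le_csSup bddS ⟨q', st14_A_mono hs1b1 hq', rfl⟩
      _ = phi g x y1 y2 s1 s2 s1 b2 q := hmax
      _ = phi g x y1 y2 s1 s2 b1 b2 q := hpe.symm
  · exact le_csSup bddB ⟨q, hqB, rfl⟩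

lemma st14_sign_neg {t : ℝ} (h : (-1 : ℝ) = Real.sign t) : t < 0 := by
  rcases lt_trichotomy t 0 with h' | h' | h'
  · exact h'
  · rw [h', Real.sign_zero] at h; norm_num at h
  · rw [Real.sign_of_pos h'] at h; norm_num at h

lemma st14_sign_zero {t : ℝ} (h : (0 : ℝ) = Real.sign t) : t = 0 :=
  Real.sign_eq_zero_iff.mp h.symm

end AuxStatement14
/-- properties of trading zones: (1) 𝐭^{(−1,i)}(s̲₁,s̲₂,s̲₁,s̄₂) ⊆
𝐭^{(−1,i)}(s̲₁,s̲₂,s̄₁,s̄₂); (2) 𝐭^{(0,i)}(s̲₁,s̲₂,s̲₁,s̄₂) ⊆ 𝐭^{(0,i)}(s̲₁,s̲₂,s̄₁,s̄₂);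
(3) 𝐭^{(0,i)}(s̲₁,s̲₂,s̲₁,s̄₂) ∩ 𝐭^{(−1,j)}(s̲₁,s̲₂,s̄₁,s̄₂) = ∅. -/
theorem statement14
    (g : ℝ → ℝ → ℝ → ℝ)
    (hg : StrictConcaveOn ℝ {v : ℝ × ℝ × ℝ | 0 ≤ v.1 ∧ 0 ≤ v.2.1 ∧ 0 ≤ v.2.2}
      (fun v => g v.1 v.2.1 v.2.2))
    (hg1 : ∀ a aQ b c : ℝ, 0 ≤ a → 0 ≤ b → 0 ≤ c → a < aQ → g a b c < g aQ b c)
    (hg2 : ∀ a b bQ c : ℝ, 0 ≤ a → 0 ≤ b → 0 ≤ c → b < bQ → g a b c < g a bQ c)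
    (hg3 : ∀ a b c cQ : ℝ, 0 ≤ a → 0 ≤ b → 0 ≤ c → c < cQ → g a b c < g a b cQ)
    (s1 s2 b1 b2 : ℝ) (hD : memD s1 s2 b1 b2)
    (i j : ℝ) (hi : i ∈ ({-1, 0, 1} : Set ℝ)) (hj : j ∈ ({-1, 0, 1} : Set ℝ)) :
    tset g (-1) i s1 s2 s1 b2 ⊆ tset g (-1) i s1 s2 b1 b2 ∧
    tset g 0 i s1 s2 s1 b2 ⊆ tset g 0 i s1 s2 b1 b2 ∧
    tset g 0 i s1 s2 s1 b2 ∩ tset g (-1) j s1 s2 b1 b2 = ∅ := by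

  have hD' : memD s1 s2 b1 b2 := hD
  obtain ⟨hs1, hs1b1, hs2, hs2b2⟩ := hD
  have hb1 : 0 < b1 := lt_of_lt_of_le hs1 hs1b1
  have hb2 : 0 < b2 := lt_of_lt_of_le hs2 hs2b2
  -- the common subset argument for i1 = -1 or i1 = 0
  have key : ∀ i1 i2 : ℝ, (i1 = -1 ∨ i1 = 0) →
      tset g i1 i2 s1 s2 s1 b2 ⊆ tset g i1 i2 s1 s2 b1 b2 := by
    intro i1 i2 hi1 v hv
    simp only [tset, Set.mem_setOf_eq] at hv ⊢
    obtain ⟨hx, hy1, hy2, q, hqAsgn, hPhi⟩ := hv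
    have hqAsgn' := hqAsgn
    simp only [Asgn, Set.mem_setOf_eq] at hqAsgn'
    obtain ⟨hqA, hsgn1, hsgn2, hprod⟩ := hqAsgn'
    have hA' := hqA
    simp only [A, Set.mem_setOf_eq] at hA'
    obtain ⟨h1, h2, h3, h4, -, -, -, -, -⟩ := hA'
    have hp1 : 0 ≤ q.1 * q.2.2.1 := mul_nonneg h1 h3
    have hp2 : 0 ≤ q.2.1 * q.2.2.2 := mul_nonneg h2 h4
    have hpz : q.1 * q.2.2.1 = 0 := by linarith
    have hq1 : q.1 = 0 := by
      rcases hi1 with h | h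
      · subst h
        have hlt := st14_sign_neg hsgn1
        rcases mul_eq_zero.mp hpz with h0 | h0
        · exact h0
        · exfalso; rw [h0] at hlt; linarith
      · subst h
        have heq := st14_sign_zero hsgn1
        have h' : q.2.2.1 = q.1 := by linarith
        rw [h'] at hpz
        exact mul_self_eq_zero.mp hpz
    have hPhiB := st14_Phi_swap g hg1 hg2 hg3 hD' hqA hq1 hPhi
    refine ⟨hx, hy1, hy2, q, ?_, hPhiB⟩
    simp only [Asgn, Set.mem_setOf_eq]
    exact ⟨(st14_A_swap hq1).mpr hqA, hsgn1, hsgn2, hprod⟩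
  refine ⟨key (-1) i (Or.inl rfl), key 0 i (Or.inr rfl), ?_⟩
  -- part (3)
  rw [Set.eq_empty_iff_forall_notMem]
  rintro v ⟨hv0, hvm⟩
  simp only [tset, Set.mem_setOf_eq] at hv0 hvm
  obtain ⟨hx, hy1, hy2, q0, hq0Asgn, hPhi0⟩ := hv0
  obtain ⟨-, -, -, qm, hqmAsgn, hPhim⟩ := hvm
  set x := v.1
  set y1 := v.2.1
  set y2 := v.2.2
  simp only [Asgn, Set.mem_setOf_eq] at hq0Asgn hqmAsgn
  obtain ⟨hq0A, hsgn01, -, hprod0⟩ := hq0Asgn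
  obtain ⟨hqmA, hsgnm1, -, hprodm⟩ := hqmAsgn
  -- components of admissibility
  have hA0 := hq0A
  have hAm := hqmA
  simp only [A, Set.mem_setOf_eq] at hA0 hAm
  obtain ⟨a1, a2, a3, a4, a5, a6, a7, a8, a9⟩ := hA0
  obtain ⟨c1, c2, c3, c4, c5, c6, c7, c8, c9⟩ := hAm
  -- q0 : l1 = m1 = 0
  have heq0 := st14_sign_zero hsgn01
  have hq01 : q0.1 = 0 ∧ q0.2.2.1 = 0 := by
    have hp1 : 0 ≤ q0.1 * q0.2.2.1 := mul_nonneg a1 a3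
    have hp2 : 0 ≤ q0.2.1 * q0.2.2.2 := mul_nonneg a2 a4
    have hpz : q0.1 * q0.2.2.1 = 0 := by linarith
    have h' : q0.2.2.1 = q0.1 := by linarith
    rw [h'] at hpz
    have := mul_self_eq_zero.mp hpz
    exact ⟨this, by linarith⟩
  -- qm : l1 = 0, m1 > 0
  have hltm := st14_sign_neg hsgnm1
  have hqm1 : qm.1 = 0 := by
    have hp1 : 0 ≤ qm.1 * qm.2.2.1 := mul_nonneg c1 c3
    have hp2 : 0 ≤ qm.2.1 * qm.2.2.2 := mul_nonneg c2 c4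
    have hpz : qm.1 * qm.2.2.1 = 0 := by linarith
    rcases mul_eq_zero.mp hpz with h0 | h0
    · exact h0
    · exfalso; rw [h0] at hltm; linarith
  have hqmm1 : 0 < qm.2.2.1 := by linarith
  -- Phi in the b1-market is also attained at q0
  have hPhiB0 := st14_Phi_swap g hg1 hg2 hg3 hD' hq0A hq01.1 hPhi0
  -- hence phi values coincide
  have hqmAs : qm ∈ A x y1 y2 s1 s2 s1 b2 := (st14_A_swap hqm1).mp hqmA
  have hAms := hqmAs
  simp only [A, Set.mem_setOf_eq] at hAms
  obtain ⟨-, -, -, -, c5', -, -, -, -⟩ := hAms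
  have hval : phi g x y1 y2 s1 s2 s1 b2 qm = phi g x y1 y2 s1 s2 s1 b2 q0 := by
    have e1 : phi g x y1 y2 s1 s2 b1 b2 qm = phi g x y1 y2 s1 s2 b1 b2 q0 := by
      rw [← hPhim, ← hPhiB0]
    rw [st14_phi_swap g hqm1, st14_phi_swap g hq01.1] at e1
    exact e1
  -- the midpoint strategy
  set r : ℝ × ℝ × ℝ × ℝ := ((q0.1 + qm.1) / 2, (q0.2.1 + qm.2.1) / 2,
    (q0.2.2.1 + qm.2.2.1) / 2, (q0.2.2.2 + qm.2.2.2) / 2) with hrdef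
  have hrA : r ∈ A x y1 y2 s1 s2 s1 b2 := by
    simp only [A, Set.mem_setOf_eq, hrdef]
    refine ⟨by linarith, by linarith, by linarith, by linarith, by linarith,
      by linarith, by linarith, by linarith, by linarith⟩
  -- strict concavity at the two distinct optimal post-positions
  set p0 : ℝ × ℝ × ℝ := (x + s1 * q0.2.2.1 + s2 * q0.2.2.2 - s1 * q0.1 - b2 * q0.2.1,
    y1 - q0.2.2.1 + q0.1, y2 - q0.2.2.2 + q0.2.1) with hp0def
  set pm : ℝ × ℝ × ℝ := (x + s1 * qm.2.2.1 + s2 * qm.2.2.2 - s1 * qm.1 - b2 * qm.2.1,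
    y1 - qm.2.2.1 + qm.1, y2 - qm.2.2.2 + qm.2.1) with hpmdef
  have hp0S : p0 ∈ {v : ℝ × ℝ × ℝ | 0 ≤ v.1 ∧ 0 ≤ v.2.1 ∧ 0 ≤ v.2.2} := ⟨a5, a6, a7⟩
  have hpmS : pm ∈ {v : ℝ × ℝ × ℝ | 0 ≤ v.1 ∧ 0 ≤ v.2.1 ∧ 0 ≤ v.2.2} := ⟨c5', c6, c7⟩
  have hne : p0 ≠ pm := by
    intro h
    have h2 := congrArg (fun p : ℝ × ℝ × ℝ => p.2.1) h
    simp only [hp0def, hpmdef] at h2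
    have hq010 := hq01.1
    have hq0210 := hq01.2
    linarith
  have hcc := hg.2 hp0S hpmS hne (by norm_num : (0:ℝ) < 1/2)
    (by norm_num : (0:ℝ) < 1/2) (by norm_num)
  simp only [hp0def, hpmdef, Prod.smul_mk, Prod.mk_add_mk, smul_eq_mul] at hcc
  have hphir : phi g x y1 y2 s1 s2 s1 b2 r
      = g (1/2 * (x + s1 * q0.2.2.1 + s2 * q0.2.2.2 - s1 * q0.1 - b2 * q0.2.1)
            + 1/2 * (x + s1 * qm.2.2.1 + s2 * qm.2.2.2 - s1 * qm.1 - b2 * qm.2.1))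
          (1/2 * (y1 - q0.2.2.1 + q0.1) + 1/2 * (y1 - qm.2.2.1 + qm.1))
          (1/2 * (y2 - q0.2.2.2 + q0.2.1) + 1/2 * (y2 - qm.2.2.2 + qm.2.1)) := by
    simp only [phi, hrdef]
    congr 1 <;> ring_nf
  have hp0val : phi g x y1 y2 s1 s2 s1 b2 q0 = g p0.1 p0.2.1 p0.2.2 := by
    simp only [phi, hp0def]
  have hpmval : phi g x y1 y2 s1 s2 s1 b2 qm = g pm.1 pm.2.1 pm.2.2 := by
    simp only [phi, hpmdef]
  have bddS := st14_bddAbove g hg1 hg2 hg3 x y1 y2 s1 s2 s1 b2 hs1 hs2 hs1 hb2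
  have hle : phi g x y1 y2 s1 s2 s1 b2 r ≤ Phi g x y1 y2 s1 s2 s1 b2 :=
    le_csSup bddS ⟨r, hrA, rfl⟩
  simp only [hp0def, hpmdef] at hp0val hpmval
  rw [hphir] at hle
  rw [hPhi0] at hle
  linarith [hcc, hval, hle]
end

section
/- For (s̲₁,s̲₂,s̄₁,s̄₂) ∈ 𝔻 and i ∈ {−1,0,1} one has the equality of buying zones t^{(1,i)}(s̲₁,s̲₂,s̄₁,s̄₂) = t^{(1,i)}(s̄₁,s̲₂,s̄₁,s̄₂). -/
open Set

section Aux

variable (g : ℝ → ℝ → ℝ → ℝ)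

lemma gmono1 (hg1 : ∀ a aQ b c : ℝ, 0 ≤ a → 0 ≤ b → 0 ≤ c → a < aQ → g a b c < g aQ b c)
    {a a' b c : ℝ} (ha : 0 ≤ a) (hb : 0 ≤ b) (hc : 0 ≤ c) (h : a ≤ a') :
    g a b c ≤ g a' b c := by
  rcases eq_or_lt_of_le h with rfl | h
  · exact le_refl _
  · exact (hg1 a a' b c ha hb hc h).le

lemma gmono2 (hg2 : ∀ a b bQ c : ℝ, 0 ≤ a → 0 ≤ b → 0 ≤ c → b < bQ → g a b c < g a bQ c)
    {a b b' c : ℝ} (ha : 0 ≤ a) (hb : 0 ≤ b) (hc : 0 ≤ c) (h : b ≤ b') :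
    g a b c ≤ g a b' c := by
  rcases eq_or_lt_of_le h with rfl | h
  · exact le_refl _
  · exact (hg2 a b b' c ha hb hc h).le

lemma gmono3 (hg3 : ∀ a b c cQ : ℝ, 0 ≤ a → 0 ≤ b → 0 ≤ c → c < cQ → g a b c < g a b cQ)
    {a b c c' : ℝ} (ha : 0 ≤ a) (hb : 0 ≤ b) (hc : 0 ≤ c) (h : c ≤ c') :
    g a b c ≤ g a b c' := by
  rcases eq_or_lt_of_le h with rfl | h
  · exact le_refl _
  · exact (hg3 a b c c' ha hb hc h).le

lemma zero_mem_A (x y1 y2 s1 s2 b1 b2 : ℝ) (hx : 0 ≤ x) (hy1 : 0 ≤ y1) (hy2 : 0 ≤ y2) :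
    ((0,0,0,0) : ℝ × ℝ × ℝ × ℝ) ∈ A x y1 y2 s1 s2 b1 b2 := by
  simp only [A, Set.mem_setOf_eq, mul_zero, add_zero, sub_zero, le_refl, true_and]
  exact ⟨hx, by linarith, by linarith, hy1, hy2⟩

lemma phi_bdd
    (hg1 : ∀ a aQ b c : ℝ, 0 ≤ a → 0 ≤ b → 0 ≤ c → a < aQ → g a b c < g aQ b c)
    (hg2 : ∀ a b bQ c : ℝ, 0 ≤ a → 0 ≤ b → 0 ≤ c → b < bQ → g a b c < g a bQ c)
    (hg3 : ∀ a b c cQ : ℝ, 0 ≤ a → 0 ≤ b → 0 ≤ c → c < cQ → g a b c < g a b cQ)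
    (x y1 y2 s1 s2 b1 b2 : ℝ)
    (hx : 0 ≤ x) (hy1 : 0 ≤ y1) (hy2 : 0 ≤ y2)
    (hs1 : 0 < s1) (hs2 : 0 < s2) (hb1 : 0 < b1) (hb2 : 0 < b2) :
    BddAbove (phi g x y1 y2 s1 s2 b1 b2 '' A x y1 y2 s1 s2 b1 b2) := by
  set C := x + s1 * y1 + s2 * y2 with hCdef
  have hC0 : 0 ≤ C := by positivity
  have hC1 : 0 ≤ C / b1 := div_nonneg hC0 hb1.le
  have hC2 : 0 ≤ C / b2 := div_nonneg hC0 hb2.le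
  refine ⟨g C (y1 + C / b1) (y2 + C / b2), ?_⟩
  rintro w ⟨q, hq, rfl⟩
  obtain ⟨l1, l2, m1, m2⟩ := q
  simp only [A, Set.mem_setOf_eq] at hq
  obtain ⟨h1, h2, h3, h4, h5, h6, h7, h8, h9⟩ := hq
  have ha1 : s1 * m1 ≤ s1 * y1 := mul_le_mul_of_nonneg_left h8 hs1.le
  have ha2 : s2 * m2 ≤ s2 * y2 := mul_le_mul_of_nonneg_left h9 hs2.le
  have hb1l : 0 ≤ b1 * l1 := mul_nonneg hb1.le h1
  have hb2l : 0 ≤ b2 * l2 := mul_nonneg hb2.le h2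
  have hcC : x + s1 * m1 + s2 * m2 - b1 * l1 - b2 * l2 ≤ C := by
    rw [hCdef]; linarith
  have hl1 : l1 ≤ C / b1 := by
    rw [le_div_iff₀ hb1, hCdef]; nlinarith
  have hl2 : l2 ≤ C / b2 := by
    rw [le_div_iff₀ hb2, hCdef]; nlinarith
  have hp1 : y1 - m1 + l1 ≤ y1 + C / b1 := by linarith
  have hp2 : y2 - m2 + l2 ≤ y2 + C / b2 := by linarith
  simp only [phi]
  calc g (x + s1 * m1 + s2 * m2 - b1 * l1 - b2 * l2) (y1 - m1 + l1) (y2 - m2 + l2)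
      ≤ g C (y1 - m1 + l1) (y2 - m2 + l2) := gmono1 g hg1 h5 h6 h7 hcC
    _ ≤ g C (y1 + C / b1) (y2 - m2 + l2) := gmono2 g hg2 hC0 h6 h7 hp1
    _ ≤ g C (y1 + C / b1) (y2 + C / b2) :=
        gmono3 g hg3 hC0 (by linarith) h7 hp2

/-- If m₁ = 0 then φ does not depend on s₁. -/
lemma phi_indep (x y1 y2 s1 s1' s2 b1 b2 : ℝ) (q : ℝ × ℝ × ℝ × ℝ) (hm1 : q.2.2.1 = 0) :
    phi g x y1 y2 s1 s2 b1 b2 q = phi g x y1 y2 s1' s2 b1 b2 q := by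
  simp only [phi, hm1, mul_zero]

/-- If m₁ = 0 then membership in 𝔸 does not depend on s₁. -/
lemma A_indep (x y1 y2 s1 s1' s2 b1 b2 : ℝ) (q : ℝ × ℝ × ℝ × ℝ) (hm1 : q.2.2.1 = 0) :
    q ∈ A x y1 y2 s1 s2 b1 b2 ↔ q ∈ A x y1 y2 s1' s2 b1 b2 := by
  simp only [A, Set.mem_setOf_eq, hm1, mul_zero]

lemma A_mono (x y1 y2 s1 s2 b1 b2 : ℝ) (h : s1 ≤ b1) :
    A x y1 y2 s1 s2 b1 b2 ⊆ A x y1 y2 b1 s2 b1 b2 := by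
  rintro ⟨l1, l2, m1, m2⟩ hq
  simp only [A, Set.mem_setOf_eq] at hq ⊢
  obtain ⟨h1, h2, h3, h4, h5, h6, h7, h8, h9⟩ := hq
  have : s1 * m1 ≤ b1 * m1 := mul_le_mul_of_nonneg_right h h3
  exact ⟨h1, h2, h3, h4, by linarith, h6, h7, h8, h9⟩

/-- Key lemma: if q is optimal at (s1,s2,b1,b2), buys asset 1 (l₁>0, m₁=0), then no
strategy admissible at (b1,s2,b1,b2) beats it there. -/
lemma key
    (hg : StrictConcaveOn ℝ {v : ℝ × ℝ × ℝ | 0 ≤ v.1 ∧ 0 ≤ v.2.1 ∧ 0 ≤ v.2.2}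
      (fun v => g v.1 v.2.1 v.2.2))
    (x y1 y2 s1 s2 b1 b2 : ℝ) (hy1 : 0 ≤ y1)
    (q : ℝ × ℝ × ℝ × ℝ) (hqA : q ∈ A x y1 y2 s1 s2 b1 b2)
    (hm1 : q.2.2.1 = 0) (hl1 : 0 < q.1)
    (hopt : ∀ r ∈ A x y1 y2 s1 s2 b1 b2,
      phi g x y1 y2 s1 s2 b1 b2 r ≤ phi g x y1 y2 s1 s2 b1 b2 q)
    (q' : ℝ × ℝ × ℝ × ℝ) (hq' : q' ∈ A x y1 y2 b1 s2 b1 b2) :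
    phi g x y1 y2 b1 s2 b1 b2 q' ≤ phi g x y1 y2 s1 s2 b1 b2 q := by
  obtain ⟨l1, l2, m1, m2⟩ := q
  obtain ⟨l1', l2', m1', m2'⟩ := q'
  simp only at hm1 hl1
  subst hm1
  simp only [A, Set.mem_setOf_eq] at hqA hq'
  obtain ⟨h1, h2, h3, h4, h5, h6, h7, h8, h9⟩ := hqA
  obtain ⟨h1', h2', h3', h4', h5', h6', h7', h8', h9'⟩ := hq'
  rcases le_or_gt m1' l1' with hcase | hcase
  · -- net buying (or zero): cancel and stay admissible at s1
    have hrA : ((l1' - m1', l2', 0, m2') : ℝ × ℝ × ℝ × ℝ) ∈ A x y1 y2 s1 s2 b1 b2 := by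
      simp only [A, Set.mem_setOf_eq]
      exact ⟨by linarith, h2', le_refl _, h4', by linarith, by linarith, h7', hy1, h9'⟩
    have := hopt _ hrA
    simp only [phi] at this ⊢
    have e1 : x + s1 * (0:ℝ) + s2 * m2' - b1 * (l1' - m1') - b2 * l2'
        = x + b1 * m1' + s2 * m2' - b1 * l1' - b2 * l2' := by ring
    have e2 : y1 - (0:ℝ) + (l1' - m1') = y1 - m1' + l1' := by ring
    rw [e1, e2] at this
    exact this
  · -- net selling: use concavity
    set μ : ℝ := m1' - l1' with hμdef
    have hμ : 0 < μ := by simp only [hμdef]; linarith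
    have hden : 0 < l1 + μ := by linarith
    set lam : ℝ := l1 / (l1 + μ) with hlamdef
    have hlam0 : 0 < lam := div_pos hl1 hden
    have hlam1 : lam < 1 := (div_lt_one hden).mpr (by linarith)
    have hkey : (1 - lam) * l1 = lam * μ := by
      rw [hlamdef]; field_simp; ring
    -- the combined strategy
    have hmem1 : ((x + s1 * (0:ℝ) + s2 * m2 - b1 * l1 - b2 * l2, y1 - (0:ℝ) + l1,
        y2 - m2 + l2) : ℝ × ℝ × ℝ) ∈
        {v : ℝ × ℝ × ℝ | 0 ≤ v.1 ∧ 0 ≤ v.2.1 ∧ 0 ≤ v.2.2} := ⟨h5, h6, h7⟩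
    have hmem2 : ((x + b1 * m1' + s2 * m2' - b1 * l1' - b2 * l2', y1 - m1' + l1',
        y2 - m2' + l2') : ℝ × ℝ × ℝ) ∈
        {v : ℝ × ℝ × ℝ | 0 ≤ v.1 ∧ 0 ≤ v.2.1 ∧ 0 ≤ v.2.2} := ⟨h5', h6', h7'⟩
    have hconc := hg.concaveOn.2 hmem1 hmem2
      (by linarith : (0:ℝ) ≤ 1 - lam) hlam0.le (by ring : 1 - lam + lam = 1)
    simp only [Prod.smul_mk, Prod.mk_add_mk, smul_eq_mul] at hconc
    set G := phi g x y1 y2 s1 s2 b1 b2 (l1, l2, 0, m2) with hGdef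
    set G' := phi g x y1 y2 b1 s2 b1 b2 (l1', l2', m1', m2') with hG'def
    have hGeq : G = g (x + s1 * (0:ℝ) + s2 * m2 - b1 * l1 - b2 * l2) (y1 - 0 + l1)
        (y2 - m2 + l2) := by simp only [hGdef, phi]
    have hG'eq : G' = g (x + b1 * m1' + s2 * m2' - b1 * l1' - b2 * l2') (y1 - m1' + l1')
        (y2 - m2' + l2') := by simp only [hG'def, phi]
    -- the strategy r realizing the convex combination at prices (s1,s2,b1,b2)
    have hrA : ((0, (1-lam) * l2 + lam * l2', 0, (1-lam) * m2 + lam * m2') :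
        ℝ × ℝ × ℝ × ℝ) ∈ A x y1 y2 s1 s2 b1 b2 := by
      simp only [A, Set.mem_setOf_eq]
      have c1 : (0:ℝ) ≤ (1-lam) * l2 + lam * l2' :=
        add_nonneg (mul_nonneg (by linarith) h2) (mul_nonneg hlam0.le h2')
      have c2 : (0:ℝ) ≤ (1-lam) * m2 + lam * m2' :=
        add_nonneg (mul_nonneg (by linarith) h4) (mul_nonneg hlam0.le h4')
      have cbud : x + s1 * (0:ℝ) + s2 * ((1-lam) * m2 + lam * m2')
          - b1 * (0:ℝ) - b2 * ((1-lam) * l2 + lam * l2')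
          = (1-lam) * (x + s1 * (0:ℝ) + s2 * m2 - b1 * l1 - b2 * l2)
            + lam * (x + b1 * m1' + s2 * m2' - b1 * l1' - b2 * l2') := by
        have hk : (1 - lam) * l1 = lam * (m1' - l1') := hkey
        linear_combination b1 * hk
      have cbud0 : (0:ℝ) ≤ x + s1 * (0:ℝ) + s2 * ((1-lam) * m2 + lam * m2')
          - b1 * (0:ℝ) - b2 * ((1-lam) * l2 + lam * l2') := by
        rw [cbud]
        have := mul_nonneg (by linarith : (0:ℝ) ≤ 1 - lam) h5
        have := mul_nonneg hlam0.le h5'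
        linarith
      have cy2 : (0:ℝ) ≤ y2 - ((1-lam) * m2 + lam * m2') + ((1-lam) * l2 + lam * l2') := by
        have e : y2 - ((1-lam) * m2 + lam * m2') + ((1-lam) * l2 + lam * l2')
            = (1-lam) * (y2 - m2 + l2) + lam * (y2 - m2' + l2') := by ring
        rw [e]
        have := mul_nonneg (by linarith : (0:ℝ) ≤ 1 - lam) h7
        have := mul_nonneg hlam0.le h7'
        linarith
      have cm2 : (1-lam) * m2 + lam * m2' ≤ y2 := by
        have e1 : (1-lam) * m2 ≤ (1-lam) * y2 :=
          mul_le_mul_of_nonneg_left h9 (by linarith)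
        have e2 : lam * m2' ≤ lam * y2 := mul_le_mul_of_nonneg_left h9' hlam0.le
        nlinarith
      exact ⟨le_refl _, c1, le_refl _, c2, cbud0, by linarith, cy2, hy1, cm2⟩
    have hrle := hopt _ hrA
    -- φ at r equals g at the convex combination
    have hre : phi g x y1 y2 s1 s2 b1 b2
        ((0, (1-lam) * l2 + lam * l2', 0, (1-lam) * m2 + lam * m2'))
        = g ((1-lam) * (x + s1 * (0:ℝ) + s2 * m2 - b1 * l1 - b2 * l2)
              + lam * (x + b1 * m1' + s2 * m2' - b1 * l1' - b2 * l2'))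
            ((1-lam) * (y1 - 0 + l1) + lam * (y1 - m1' + l1'))
            ((1-lam) * (y2 - m2 + l2) + lam * (y2 - m2' + l2')) := by
      simp only [phi]
      have hk : (1 - lam) * l1 = lam * (m1' - l1') := hkey
      have e1 : x + s1 * (0:ℝ) + s2 * ((1-lam) * m2 + lam * m2')
          - b1 * (0:ℝ) - b2 * ((1-lam) * l2 + lam * l2')
          = (1-lam) * (x + s1 * (0:ℝ) + s2 * m2 - b1 * l1 - b2 * l2)
            + lam * (x + b1 * m1' + s2 * m2' - b1 * l1' - b2 * l2') := by
        linear_combination b1 * hk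
      have e2 : y1 - (0:ℝ) + (0:ℝ)
          = (1-lam) * (y1 - 0 + l1) + lam * (y1 - m1' + l1') := by
        linear_combination -hk
      have e3 : y2 - ((1-lam) * m2 + lam * m2') + ((1-lam) * l2 + lam * l2')
          = (1-lam) * (y2 - m2 + l2) + lam * (y2 - m2' + l2') := by ring
      rw [e1, e2, e3]
    rw [hre] at hrle
    rw [hGeq] at hrle ⊢
    rw [hG'eq]
    have hfinal : (1-lam) * g (x + s1 * (0:ℝ) + s2 * m2 - b1 * l1 - b2 * l2) (y1 - 0 + l1)
          (y2 - m2 + l2)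
        + lam * g (x + b1 * m1' + s2 * m2' - b1 * l1' - b2 * l2') (y1 - m1' + l1')
          (y2 - m2' + l2')
        ≤ g (x + s1 * (0:ℝ) + s2 * m2 - b1 * l1 - b2 * l2) (y1 - 0 + l1) (y2 - m2 + l2) :=
      le_trans hconc hrle
    nlinarith [hfinal, hlam0]

end Aux

/-- equality of buying zones 𝐭^{(1,i)}(s̲₁,s̲₂,s̄₁,s̄₂) = 𝐭^{(1,i)}(s̄₁,s̲₂,s̄₁,s̄₂). -/
theorem statement17
    (g : ℝ → ℝ → ℝ → ℝ)
    (hg : StrictConcaveOn ℝ {v : ℝ × ℝ × ℝ | 0 ≤ v.1 ∧ 0 ≤ v.2.1 ∧ 0 ≤ v.2.2}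
      (fun v => g v.1 v.2.1 v.2.2))
    (hg1 : ∀ a aQ b c : ℝ, 0 ≤ a → 0 ≤ b → 0 ≤ c → a < aQ → g a b c < g aQ b c)
    (hg2 : ∀ a b bQ c : ℝ, 0 ≤ a → 0 ≤ b → 0 ≤ c → b < bQ → g a b c < g a bQ c)
    (hg3 : ∀ a b c cQ : ℝ, 0 ≤ a → 0 ≤ b → 0 ≤ c → c < cQ → g a b c < g a b cQ)
    (s1 s2 b1 b2 : ℝ) (hD : memD s1 s2 b1 b2)
    (i : ℝ) (hi : i ∈ ({-1, 0, 1} : Set ℝ)) :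
    tset g 1 i s1 s2 b1 b2 = tset g 1 i b1 s2 b1 b2 := by
  obtain ⟨hs1, hs1b, hs2, hs2b⟩ := hD
  have hb1 : 0 < b1 := lt_of_lt_of_le hs1 hs1b
  have hb2 : 0 < b2 := lt_of_lt_of_le hs2 hs2b
  ext ⟨x, y1, y2⟩
  simp only [tset, Set.mem_setOf_eq]
  constructor
  · rintro ⟨hx, hy1, hy2, q, ⟨hqA, hi1, hi2, hcomp⟩, hPhi⟩
    -- extract l₁ > m₁ from the sign, then m₁ = 0 and l₁ > 0
    have hpos : 0 < q.1 - q.2.2.1 := by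
      rcases lt_trichotomy (q.1 - q.2.2.1) 0 with h | h | h
      · rw [Real.sign_of_neg h] at hi1; norm_num at hi1
      · rw [h, Real.sign_zero] at hi1; norm_num at hi1
      · exact h
    obtain ⟨h1, h2, h3, h4, h5, h6, h7, h8, h9⟩ := hqA
    have hm1 : q.2.2.1 = 0 := by
      by_contra hne
      have hm1pos : 0 < q.2.2.1 := lt_of_le_of_ne h3 (Ne.symm hne)
      have hl1pos : 0 < q.1 := by linarith
      nlinarith [mul_pos hl1pos hm1pos, mul_nonneg h2 h4]
    have hl1pos : 0 < q.1 := by linarith [hpos, h3]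
    have hqA' : q ∈ A x y1 y2 s1 s2 b1 b2 := ⟨h1, h2, h3, h4, h5, h6, h7, h8, h9⟩
    have hqAb : q ∈ A x y1 y2 b1 s2 b1 b2 := (A_indep x y1 y2 s1 b1 s2 b1 b2 q hm1).1 hqA'
    have hbddS := phi_bdd g hg1 hg2 hg3 x y1 y2 s1 s2 b1 b2 hx hy1 hy2 hs1 hs2 hb1 hb2
    have hbddB := phi_bdd g hg1 hg2 hg3 x y1 y2 b1 s2 b1 b2 hx hy1 hy2 hb1 hs2 hb1 hb2
    have hopt : ∀ r ∈ A x y1 y2 s1 s2 b1 b2,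
        phi g x y1 y2 s1 s2 b1 b2 r ≤ phi g x y1 y2 s1 s2 b1 b2 q := by
      intro r hr
      have := le_csSup hbddS (Set.mem_image_of_mem _ hr)
      rw [← Phi, hPhi] at this; exact this
    have hphieq : phi g x y1 y2 s1 s2 b1 b2 q = phi g x y1 y2 b1 s2 b1 b2 q :=
      phi_indep g x y1 y2 s1 b1 s2 b1 b2 q hm1
    refine ⟨hx, hy1, hy2, q, ⟨hqAb, hi1, hi2, hcomp⟩, le_antisymm ?_ ?_⟩
    · -- Phi_b ≤ phi_b q
      apply csSup_le
      · exact ⟨_, Set.mem_image_of_mem _ (zero_mem_A x y1 y2 b1 s2 b1 b2 hx hy1 hy2)⟩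
      · rintro w ⟨q', hq', rfl⟩
        rw [← hphieq]
        exact key g hg x y1 y2 s1 s2 b1 b2 hy1 q hqA' hm1 hl1pos hopt q' hq'
    · exact le_csSup hbddB (Set.mem_image_of_mem _ hqAb)
  · rintro ⟨hx, hy1, hy2, q, ⟨hqAb, hi1, hi2, hcomp⟩, hPhib⟩
    have hpos : 0 < q.1 - q.2.2.1 := by
      rcases lt_trichotomy (q.1 - q.2.2.1) 0 with h | h | h
      · rw [Real.sign_of_neg h] at hi1; norm_num at hi1
      · rw [h, Real.sign_zero] at hi1; norm_num at hi1
      · exact h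
    obtain ⟨h1, h2, h3, h4, h5, h6, h7, h8, h9⟩ := hqAb
    have hm1 : q.2.2.1 = 0 := by
      by_contra hne
      have hm1pos : 0 < q.2.2.1 := lt_of_le_of_ne h3 (Ne.symm hne)
      have hl1pos : 0 < q.1 := by linarith
      nlinarith [mul_pos hl1pos hm1pos, mul_nonneg h2 h4]
    have hqAb' : q ∈ A x y1 y2 b1 s2 b1 b2 := ⟨h1, h2, h3, h4, h5, h6, h7, h8, h9⟩
    have hqAs : q ∈ A x y1 y2 s1 s2 b1 b2 := (A_indep x y1 y2 b1 s1 s2 b1 b2 q hm1).1 hqAb'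
    have hbddS := phi_bdd g hg1 hg2 hg3 x y1 y2 s1 s2 b1 b2 hx hy1 hy2 hs1 hs2 hb1 hb2
    have hbddB := phi_bdd g hg1 hg2 hg3 x y1 y2 b1 s2 b1 b2 hx hy1 hy2 hb1 hs2 hb1 hb2
    have hphieq : phi g x y1 y2 s1 s2 b1 b2 q = phi g x y1 y2 b1 s2 b1 b2 q :=
      phi_indep g x y1 y2 s1 b1 s2 b1 b2 q hm1
    refine ⟨hx, hy1, hy2, q, ⟨hqAs, hi1, hi2, hcomp⟩, le_antisymm ?_ ?_⟩
    · -- Phi_s ≤ phi_s q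
      apply csSup_le
      · exact ⟨_, Set.mem_image_of_mem _ (zero_mem_A x y1 y2 s1 s2 b1 b2 hx hy1 hy2)⟩
      · rintro w ⟨r, hr, rfl⟩
        obtain ⟨g1, g2, g3, g4, g5, g6, g7, g8, g9⟩ := hr
        have hrb : r ∈ A x y1 y2 b1 s2 b1 b2 :=
          A_mono x y1 y2 s1 s2 b1 b2 hs1b ⟨g1, g2, g3, g4, g5, g6, g7, g8, g9⟩
        have step1 : phi g x y1 y2 s1 s2 b1 b2 r ≤ phi g x y1 y2 b1 s2 b1 b2 r := by
          simp only [phi]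
          apply gmono1 g hg1 g5 g6 g7
          nlinarith [mul_le_mul_of_nonneg_right hs1b g3]
        have step2 : phi g x y1 y2 b1 s2 b1 b2 r ≤ Phi g x y1 y2 b1 s2 b1 b2 :=
          le_csSup hbddB (Set.mem_image_of_mem _ hrb)
        rw [hPhib, ← hphieq] at step2
        linarith
    · exact le_csSup hbddS (Set.mem_image_of_mem _ hqAs)
end
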